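/- arXiv:1508.01961 — 7 statements merged into one kernel-verified Lean document; each statement's English description precedes it below -/
import Mathlib

section
/- Let X₁, ..., Xₙ be Banach spaces and let Y be an infinite-dimensional closed subspace of the direct sum X = X₁ ⊕ ... ⊕ Xₙ. Let Pⱼ : X → Xⱼ denote the canonical coordinate projections. Then there exists some j ∈ {1, ..., n} such that the restriction Pⱼ|Y : Y → Xⱼ is not strictly singular. -/
/-!
Kato's argument: if `T` is strictly singular, every infinite-dimensional closed subspace
contains unit vectors `z k` with `‖T (z k)‖` as small as we like, each chosen in the kernels of
norming functionals of the earlier ones. Then the coefficients of `∑ c k • z k` are at most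
`2 ^ k` times its norm, so `T` has norm `≤ ε` on the closed span of the `z k`. Doing this in turn
for the `n` coordinate projections with `ε < 1 / n` would give a nonzero `y ∈ Y` with
`∑ j, ‖y j‖ < ‖y‖`, which is impossible for the `ℓ¹`-norm.
-/

/-- A bounded linear operator between normed spaces is *strictly singular* if its restriction
to every infinite-dimensional closed subspace fails to be bounded below. -/
def StrictlySingular {X Y : Type*} [NormedAddCommGroup X] [NormedSpace ℝ X]
    [NormedAddCommGroup Y] [NormedSpace ℝ Y] (T : X →L[ℝ] Y) : Prop :=
  ∀ Z : Submodule ℝ X, IsClosed (Z : Set X) → ¬ FiniteDimensional ℝ Z →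
    ¬ ∃ c : ℝ, 0 < c ∧ ∀ z ∈ Z, c * ‖z‖ ≤ ‖T z‖

/-- The `j`-th coordinate projection on an `ℓ¹`-direct sum of finitely many Banach spaces. -/
noncomputable def l1Proj {n : ℕ} (X : Fin n → Type*) [∀ i, NormedAddCommGroup (X i)]
    [∀ i, NormedSpace ℝ (X i)] (j : Fin n) : PiLp 1 X →L[ℝ] X j :=
  (ContinuousLinearMap.proj j).comp (PiLp.continuousLinearEquiv 1 ℝ X).toContinuousLinearMap

open Finset

theorem Submodule.not_finiteDimensional_inf_ker {K V : Type*} [DivisionRing K] [AddCommGroup V]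
    [Module K V] {Z : Submodule K V} (hZ : ¬ FiniteDimensional K Z) (g : V →ₗ[K] K) :
    ¬ FiniteDimensional K (Z ⊓ LinearMap.ker g : Submodule K V) := by
  rw [← Submodule.fg_iff_finiteDimensional] at hZ ⊢
  exact fun h => hZ (Submodule.fg_of_fg_map_of_fg_inf_ker g (IsNoetherian.noetherian _) h)

theorem LinearIndependent.not_finiteDimensional_span {K V ι : Type*} [DivisionRing K]
    [AddCommGroup V] [Module K V] [Infinite ι] {v : ι → V} (hv : LinearIndependent K v) :
    ¬ FiniteDimensional K (Submodule.span K (Set.range v)) := fun _ =>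
  Module.Finite.not_linearIndependent_of_infinite _ (linearIndependent_span hv)

section

variable {E F : Type*} [NormedAddCommGroup E] [NormedSpace ℝ E]
  [NormedAddCommGroup F] [NormedSpace ℝ F]

structure IsTriangularSystem (z : ℕ → E) (g : ℕ → StrongDual ℝ E) : Prop where
  norm_le_one : ∀ k, ‖z k‖ ≤ 1
  norm_dual_le_one : ∀ k, ‖g k‖ ≤ 1
  apply_self : ∀ k, g k (z k) = 1
  apply_of_lt : ∀ {i k}, i < k → g i (z k) = 0

namespace IsTriangularSystem

variable {z : ℕ → E} {g : ℕ → StrongDual ℝ E}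

theorem apply_linearCombination (h : IsTriangularSystem z g) (c : ℕ →₀ ℝ) (k : ℕ) :
    g k (Finsupp.linearCombination ℝ z c) = ∑ i ∈ range k, c i * g k (z i) + c k := by
  have hsupp : c.support ⊆ c.support ∪ range (k + 1) := subset_union_left
  rw [Finsupp.linearCombination_apply, map_finsuppSum,
    Finsupp.sum_of_support_subset c hsupp _ (fun _ _ => by simp)]
  simp only [map_smul, smul_eq_mul]
  rw [← sum_subset subset_union_right fun i _ hi => ?_, sum_range_succ, h.apply_self, mul_one]
  rw [h.apply_of_lt (by simp at hi; omega), mul_zero]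

theorem abs_coeff_le (h : IsTriangularSystem z g) (c : ℕ →₀ ℝ) (k : ℕ) :
    |c k| ≤ 2 ^ k * ‖Finsupp.linearCombination ℝ z c‖ := by
  set s := Finsupp.linearCombination ℝ z c
  induction k using Nat.strong_induction_on with
  | _ k ih =>
  have hgs : |g k s| ≤ ‖s‖ := by
    simpa using (g k).le_of_opNorm_le (h.norm_dual_le_one k) s
  have hgz : ∀ i, |g k (z i)| ≤ 1 := fun i => by
    simpa using (g k).le_of_opNorm_le (h.norm_dual_le_one k) (z i) |>.trans
      (mul_le_one₀ le_rfl (norm_nonneg _) (h.norm_le_one i))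
  have hgeom : ∑ i ∈ range k, (2 : ℝ) ^ i = 2 ^ k - 1 := by
    rw [geom_sum_eq (by norm_num)]; norm_num
  calc |c k| = |g k s - ∑ i ∈ range k, c i * g k (z i)| := by
        rw [h.apply_linearCombination]; ring_nf
    _ ≤ ‖s‖ + ∑ i ∈ range k, |c i| * |g k (z i)| := by
        refine (abs_sub (g k s) _).trans (add_le_add hgs ?_)
        simpa only [abs_mul] using abs_sum_le_sum_abs (fun i => c i * g k (z i)) (range k)
    _ ≤ ‖s‖ + ∑ i ∈ range k, 2 ^ i * ‖s‖ := by
        gcongr ‖s‖ + ∑ i ∈ range k, ?_ with i hi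
        exact mul_le_of_le_one_right (abs_nonneg _) (hgz i) |>.trans (ih i (mem_range.1 hi))
    _ = 2 ^ k * ‖s‖ := by rw [← sum_mul, hgeom]; ring

theorem linearIndependent (h : IsTriangularSystem z g) : LinearIndependent ℝ z :=
  linearIndependent_iff.2 fun c hc => Finsupp.ext fun k => by simpa [hc] using h.abs_coeff_le c k

theorem norm_apply_le (h : IsTriangularSystem z g) {T : E →L[ℝ] F} {ε : ℝ} (hε : 0 ≤ ε)
    (hTz : ∀ k, ‖T (z k)‖ ≤ ε / 2 * (1 / 4) ^ k) {s : E}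
    (hs : s ∈ Submodule.span ℝ (Set.range z)) : ‖T s‖ ≤ ε * ‖s‖ := by
  obtain ⟨c, rfl⟩ : s ∈ LinearMap.range (Finsupp.linearCombination ℝ z) := by
    rwa [Finsupp.range_linearCombination]
  set s := Finsupp.linearCombination ℝ z c
  have hTs : T s = ∑ i ∈ c.support, c i • T (z i) := by
    simp only [s, Finsupp.linearCombination_apply, Finsupp.sum, map_sum, map_smul]
  calc ‖T s‖ ≤ ∑ i ∈ c.support, ‖c i • T (z i)‖ := hTs ▸ norm_sum_le _ _
    _ ≤ ∑ i ∈ c.support, 2 ^ i * ‖s‖ * (ε / 2 * (1 / 4) ^ i) := by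
        gcongr with i
        rw [norm_smul, Real.norm_eq_abs]
        exact mul_le_mul (h.abs_coeff_le c i) (hTz i) (norm_nonneg _) (by positivity)
    _ = ε / 2 * ‖s‖ * ∑ i ∈ c.support, (1 / 2) ^ i := by
        rw [mul_sum]
        refine sum_congr rfl fun i _ => ?_
        have h2 : (2 : ℝ) ^ i * (1 / 2) ^ i = 1 := by rw [← mul_pow]; norm_num
        rw [show (1 / 4 : ℝ) = 1 / 2 * (1 / 2) by norm_num, mul_pow]
        linear_combination (ε / 2 * ‖s‖ * (1 / 2) ^ i) * h2
    _ ≤ ε / 2 * ‖s‖ * 2 := by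
        gcongr
        exact (summable_geometric_two.sum_le_tsum _ fun _ _ => by positivity).trans_eq
          tsum_geometric_two
    _ = ε * ‖s‖ := by ring

end IsTriangularSystem

namespace StrictlySingular

variable {T : E →L[ℝ] F}

theorem exists_unit_dual_pair_norm_apply_le (hT : StrictlySingular T) {W : Submodule ℝ E}
    (hWc : IsClosed (W : Set E)) (hWinf : ¬ FiniteDimensional ℝ W) {δ : ℝ} (hδ : 0 < δ) :
    ∃ z ∈ W, ∃ g : StrongDual ℝ E, ‖z‖ = 1 ∧ ‖g‖ ≤ 1 ∧ g z = 1 ∧ ‖T z‖ ≤ δ := by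
  obtain ⟨x, hxW, hx⟩ : ∃ x ∈ W, ‖T x‖ < δ * ‖x‖ := by
    by_contra! h
    exact hT W hWc hWinf ⟨δ, hδ, h⟩
  have hx0 : 0 < ‖x‖ := (mul_pos_iff_of_pos_left hδ).1 ((norm_nonneg _).trans_lt hx)
  set z := ‖x‖⁻¹ • x
  have hz : ‖z‖ = 1 := norm_smul_inv_norm (norm_pos_iff.1 hx0)
  obtain ⟨g, hg, hgz⟩ := exists_dual_vector ℝ z (by simp [hz])
  refine ⟨z, W.smul_mem _ hxW, g, hz, hg.le, by simpa [hz] using hgz, ?_⟩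
  calc ‖T z‖ = ‖x‖⁻¹ * ‖T x‖ := by simp [z, norm_smul]
    _ ≤ ‖x‖⁻¹ * (δ * ‖x‖) := by gcongr
    _ = δ := by field_simp

theorem exists_isTriangularSystem (hT : StrictlySingular T) {Z : Submodule ℝ E}
    (hZc : IsClosed (Z : Set E)) (hZinf : ¬ FiniteDimensional ℝ Z) {δ : ℕ → ℝ}
    (hδ : ∀ k, 0 < δ k) :
    ∃ z g, IsTriangularSystem z g ∧ (∀ k, z k ∈ Z) ∧ ∀ k, ‖T (z k)‖ ≤ δ k := by
  choose! zOf hzOf gOf hzgOf using fun (k : ℕ) (W : Submodule ℝ E)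
    (hW : IsClosed (W : Set E) ∧ ¬ FiniteDimensional ℝ W) =>
    hT.exists_unit_dual_pair_norm_apply_le hW.1 hW.2 (hδ k)
  -- `z k` is picked in `W k`, which lies in the kernels of all earlier functionals
  let W : ℕ → Submodule ℝ E := fun k =>
    Nat.rec (motive := fun _ => Submodule ℝ E) Z
      (fun k Wk => Wk ⊓ LinearMap.ker (gOf k Wk : E →ₗ[ℝ] ℝ)) k
  have hW : ∀ k, IsClosed (W k : Set E) ∧ ¬ FiniteDimensional ℝ (W k) := by
    intro k
    induction k with
    | zero => exact ⟨hZc, hZinf⟩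
    | succ k ih =>
      exact ⟨ih.1.inter (gOf k (W k)).isClosed_ker,
        Submodule.not_finiteDimensional_inf_ker ih.2 _⟩
  have hWanti : Antitone W := antitone_nat_of_succ_le fun _ => inf_le_left
  refine ⟨fun k => zOf k (W k), fun k => gOf k (W k), ⟨fun k => ?_, fun k => ?_, fun k => ?_,
    fun {i k} hik => ?_⟩, fun k => hWanti k.zero_le (hzOf k _ (hW k)), fun k => ?_⟩
  · exact (hzgOf k _ (hW k)).1.le
  · exact (hzgOf k _ (hW k)).2.1
  · exact (hzgOf k _ (hW k)).2.2.1
  · exact (hWanti hik (hzOf k _ (hW k))).2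
  · exact (hzgOf k _ (hW k)).2.2.2

theorem exists_le_forall_norm_apply_le (hT : StrictlySingular T) {Z : Submodule ℝ E}
    (hZc : IsClosed (Z : Set E)) (hZinf : ¬ FiniteDimensional ℝ Z) {ε : ℝ} (hε : 0 < ε) :
    ∃ Z' ≤ Z, IsClosed (Z' : Set E) ∧ ¬ FiniteDimensional ℝ Z' ∧
      ∀ u ∈ Z', ‖T u‖ ≤ ε * ‖u‖ := by
  obtain ⟨z, g, hzg, hzZ, hTz⟩ :=
    hT.exists_isTriangularSystem hZc hZinf (δ := fun k => ε / 2 * (1 / 4) ^ k)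
      fun k => by positivity
  set W := Submodule.span ℝ (Set.range z)
  refine ⟨W.topologicalClosure,
    W.topologicalClosure_minimal (Submodule.span_le.2 (Set.range_subset_iff.2 hzZ)) hZc,
    W.isClosed_topologicalClosure,
    fun _ => hzg.linearIndependent.not_finiteDimensional_span
      (Submodule.finiteDimensional_of_le W.le_topologicalClosure), fun u hu => ?_⟩
  have hclosed : IsClosed {u : E | ‖T u‖ ≤ ε * ‖u‖} :=
    isClosed_le (T.continuous.norm) (continuous_const.mul continuous_norm)
  rw [← SetLike.mem_coe, Submodule.topologicalClosure_coe] at hu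
  exact closure_minimal (fun s hs => hzg.norm_apply_le hε.le hTz hs) hclosed hu

end StrictlySingular

theorem exists_le_forall_mem_norm_apply_le {ι : Type*} {F : ι → Type*}
    [∀ i, NormedAddCommGroup (F i)] [∀ i, NormedSpace ℝ (F i)] {T : ∀ i, E →L[ℝ] F i}
    (s : Finset ι) (hT : ∀ i ∈ s, StrictlySingular (T i)) {Z : Submodule ℝ E}
    (hZc : IsClosed (Z : Set E)) (hZinf : ¬ FiniteDimensional ℝ Z) {ε : ℝ} (hε : 0 < ε) :
    ∃ Z' ≤ Z, IsClosed (Z' : Set E) ∧ ¬ FiniteDimensional ℝ Z' ∧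
      ∀ i ∈ s, ∀ u ∈ Z', ‖T i u‖ ≤ ε * ‖u‖ := by
  classical
  induction s using Finset.induction_on with
  | empty => exact ⟨Z, le_rfl, hZc, hZinf, by simp⟩
  | insert a s _ ih =>
    obtain ⟨Z₁, hZ₁Z, hZ₁c, hZ₁inf, hZ₁⟩ := ih fun i hi => hT i (mem_insert_of_mem hi)
    obtain ⟨Z₂, hZ₂Z₁, hZ₂c, hZ₂inf, hZ₂⟩ :=
      (hT a (mem_insert_self a s)).exists_le_forall_norm_apply_le hZ₁c hZ₁inf hε
    refine ⟨Z₂, hZ₂Z₁.trans hZ₁Z, hZ₂c, hZ₂inf, fun i hi u hu => ?_⟩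
    rcases mem_insert.1 hi with rfl | hi
    · exact hZ₂ u hu
    · exact hZ₁ i hi u (hZ₂Z₁ hu)

theorem exists_ne_zero_sum_norm_apply_lt {ι : Type*} [Fintype ι] {F : ι → Type*}
    [∀ i, NormedAddCommGroup (F i)] [∀ i, NormedSpace ℝ (F i)] {T : ∀ i, E →L[ℝ] F i}
    (hE : ¬ FiniteDimensional ℝ E) (hT : ∀ i, StrictlySingular (T i)) :
    ∃ u : E, u ≠ 0 ∧ ∑ i, ‖T i u‖ < ‖u‖ := by
  set ε : ℝ := 1 / (Fintype.card ι + 1)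
  have hε : 0 < ε := by positivity
  obtain ⟨Z, -, -, hZinf, hZ⟩ := exists_le_forall_mem_norm_apply_le univ (fun i _ => hT i)
    (Z := ⊤) (by simp) (fun _ => hE Submodule.topEquiv.finiteDimensional) hε
  obtain ⟨u, huZ, hu⟩ := Submodule.exists_mem_ne_zero_of_ne_bot (p := Z)
    fun h => hZinf (by rw [h]; infer_instance)
  refine ⟨u, hu, ?_⟩
  calc ∑ i, ‖T i u‖ ≤ ∑ _i : ι, ε * ‖u‖ := sum_le_sum fun i _ => hZ i (mem_univ i) u huZ
    _ = Fintype.card ι / (Fintype.card ι + 1) * ‖u‖ := by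
        rw [sum_const, card_univ, nsmul_eq_mul]; ring
    _ < ‖u‖ := by
        have : (Fintype.card ι : ℝ) / (Fintype.card ι + 1) < 1 := by
          rw [div_lt_one (by positivity)]; linarith
        nlinarith [norm_pos_iff.2 hu]

end

theorem exists_proj_not_strictlySingular_general {n : ℕ} (X : Fin n → Type*)
    [∀ i, NormedAddCommGroup (X i)] [∀ i, NormedSpace ℝ (X i)]
    (Y : Submodule ℝ (PiLp 1 X))
    (hYinf : ¬ FiniteDimensional ℝ Y) :
    ∃ j : Fin n, ¬ StrictlySingular ((l1Proj X j).comp Y.subtypeL) := by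
  by_contra! h
  obtain ⟨y, -, hy⟩ := exists_ne_zero_sum_norm_apply_lt hYinf h
  -- `‖y‖` and `l1Proj X j y` unfold to `‖(y : PiLp 1 X)‖` and `y j`
  exact hy.not_ge (PiLp.norm_eq_of_L1 (y : PiLp 1 X)).le

/-- if `Y` is an infinite-dimensional closed subspace of `X₁ ⊕ ... ⊕ Xₙ`
(with the `ℓ¹`-norm), then some coordinate projection restricted to `Y` is not strictly
singular. -/
theorem exists_proj_not_strictlySingular {n : ℕ} (X : Fin n → Type*)
    [∀ i, NormedAddCommGroup (X i)] [∀ i, NormedSpace ℝ (X i)] [∀ i, CompleteSpace (X i)]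
    (Y : Submodule ℝ (PiLp 1 X)) (hYc : IsClosed (Y : Set (PiLp 1 X)))
    (hYinf : ¬ FiniteDimensional ℝ Y) :
    ∃ j : Fin n, ¬ StrictlySingular ((l1Proj X j).comp Y.subtypeL) :=
  exists_proj_not_strictlySingular_general X Y hYinf
end

section
/- Let 1 ≤ p < ∞, let θ be a tree on ℕ, and let (x_k) be a semi-normalized block sequence in the ℓp-Baire sum φ(θ) of a basic sequence E such that the supports of the x_k are pairwise completely incomparable subsets of θ. Then (x_k) is equivalent to the standard unit vector basis of ℓp. -/
/-- Two finite sequences of naturals are comparable if one is an initial segment of the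
other. -/
def TreeComparable (s t : List ℕ) : Prop := s <+: t ∨ t <+: s

/-- A tree on `ℕ` : a set of finite sequences closed under initial segments. -/
def IsTree (θ : Set (List ℕ)) : Prop := ∀ s ∈ θ, ∀ t : List ℕ, t <+: s → t ∈ θ

/-- Two subsets of a tree are completely incomparable if no element of one is comparable
with any element of the other. -/
def CompIncomp (A B : Set (List ℕ)) : Prop := ∀ s ∈ A, ∀ t ∈ B, ¬ TreeComparable s t

/-- A segment of a tree `θ` : a totally ordered subset closed under intermediate nodes. -/
def IsSegment (θ I : Set (List ℕ)) : Prop :=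
  I ⊆ θ ∧ (∀ s ∈ I, ∀ t ∈ I, TreeComparable s t) ∧
    ∀ s ∈ I, ∀ t ∈ I, ∀ l ∈ θ, s <+: l → l <+: t → l ∈ I

/-- A compatible enumeration of `ℕ^{<ℕ}` : extension is monotone for the indices. -/
def CompatibleEnum (σ : ℕ ≃ List ℕ) : Prop := ∀ s t : List ℕ, s <+: t → σ.symm s ≤ σ.symm t

/-- A basic sequence: nonzero terms with uniformly bounded basis projections. -/
def IsBasicSeq {E : Type*} [NormedAddCommGroup E] [NormedSpace ℝ E] (e : ℕ → E) : Prop :=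
  (∀ n, e n ≠ 0) ∧ ∃ C : ℝ, 0 < C ∧ ∀ (a : ℕ → ℝ) (n m : ℕ), n ≤ m →
    ‖∑ i ∈ Finset.range n, a i • e i‖ ≤ C * ‖∑ i ∈ Finset.range m, a i • e i‖

/-- The `ℓᵖ`-Baire sum norm of a finitely supported vector on the tree `θ`, relative to the
basic sequence `e` : the sup over finite families of pairwise completely incomparable
segments of the `ℓᵖ` average of the norms of the corresponding parts. -/
noncomputable def lpBaireVal {E : Type*} [NormedAddCommGroup E] [NormedSpace ℝ E]
    (p : ℝ) (θ : Set (List ℕ)) (e : ℕ → E) (x : List ℕ →₀ ℝ) : ℝ :=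
  sSup { r : ℝ | ∃ (n : ℕ) (I : Fin n → Finset (List ℕ)),
    (∀ i, IsSegment θ ↑(I i)) ∧ (∀ i j : Fin n, i ≠ j → CompIncomp ↑(I i) ↑(I j)) ∧
    r = (∑ i, ‖∑ s ∈ I i, x s • e s.length‖ ^ p) ^ p⁻¹ }

section Aux

open Finset

variable {E : Type*} [NormedAddCommGroup E] [NormedSpace ℝ E]

/-- The set over which the sup defining `lpBaireVal` is taken. -/
def lpSet (p : ℝ) (θ : Set (List ℕ)) (e : ℕ → E) (x : List ℕ →₀ ℝ) : Set ℝ :=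
  { r : ℝ | ∃ (n : ℕ) (I : Fin n → Finset (List ℕ)),
    (∀ i, IsSegment θ ↑(I i)) ∧ (∀ i j : Fin n, i ≠ j → CompIncomp ↑(I i) ↑(I j)) ∧
    r = (∑ i, ‖∑ s ∈ I i, x s • e s.length‖ ^ p) ^ p⁻¹ }

lemma lpBaireVal_eq_sSup (p : ℝ) (θ : Set (List ℕ)) (e : ℕ → E) (x : List ℕ →₀ ℝ) :
    lpBaireVal p θ e x = sSup (lpSet p θ e x) := rfl

lemma zero_mem_lpSet {p : ℝ} (hp : p ≠ 0) (θ : Set (List ℕ)) (e : ℕ → E) (x : List ℕ →₀ ℝ) :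
    (0 : ℝ) ∈ lpSet p θ e x := by
  refine ⟨0, fun i => i.elim0, fun i => i.elim0, fun i => i.elim0, ?_⟩
  simp [Real.zero_rpow (inv_ne_zero hp)]

lemma mem_lpSet_of_fintype {p : ℝ} {θ : Set (List ℕ)} {e : ℕ → E} {x : List ℕ →₀ ℝ}
    {ι : Type} [Fintype ι] (I : ι → Finset (List ℕ))
    (hseg : ∀ i, IsSegment θ ↑(I i)) (hinc : ∀ i j, i ≠ j → CompIncomp ↑(I i) ↑(I j)) :
    (∑ i, ‖∑ s ∈ I i, x s • e s.length‖ ^ p) ^ p⁻¹ ∈ lpSet p θ e x := by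
  classical
  let eq := Fintype.equivFin ι
  refine ⟨Fintype.card ι, fun j => I (eq.symm j), fun j => hseg _,
    fun i j hij => hinc _ _ fun h => hij (eq.symm.injective h), ?_⟩
  congr 1
  exact (Equiv.sum_comp eq.symm fun i => ‖∑ s ∈ I i, x s • e s.length‖ ^ p).symm

lemma bddAbove_lpSet {p : ℝ} (hp : 1 ≤ p) (θ : Set (List ℕ)) (e : ℕ → E) (x : List ℕ →₀ ℝ) :
    BddAbove (lpSet p θ e x) := by
  classical
  have hp0 : p ≠ 0 := by positivity
  set M : ℝ := ∑ s ∈ x.support, |x s| * ‖e s.length‖ with hM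
  have hM0 : 0 ≤ M := Finset.sum_nonneg fun s _ => mul_nonneg (abs_nonneg _) (norm_nonneg _)
  refine ⟨((x.support.card : ℝ) * M ^ p) ^ p⁻¹, ?_⟩
  rintro r ⟨n, I, hseg, hinc, rfl⟩
  refine Real.rpow_le_rpow
    (Finset.sum_nonneg fun i _ => Real.rpow_nonneg (norm_nonneg _) p) ?_ (by positivity)
  have hterm : ∀ i : Fin n, ‖∑ s ∈ I i, x s • e s.length‖ ^ p ≤ M ^ p := by
    intro i
    refine Real.rpow_le_rpow (norm_nonneg _) ?_ (by linarith)
    calc ‖∑ s ∈ I i, x s • e s.length‖ ≤ ∑ s ∈ I i, |x s| * ‖e s.length‖ := by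
          refine (norm_sum_le _ _).trans (le_of_eq ?_)
          exact Finset.sum_congr rfl fun s _ => by rw [norm_smul, Real.norm_eq_abs]
      _ = ∑ s ∈ I i ∩ x.support, |x s| * ‖e s.length‖ := by
          refine (Finset.sum_subset Finset.inter_subset_left ?_).symm
          intro s hs hns
          have hx0 : x s = 0 := by
            by_contra h
            exact hns (Finset.mem_inter.2 ⟨hs, Finsupp.mem_support_iff.2 h⟩)
          simp [hx0]
      _ ≤ M := Finset.sum_le_sum_of_subset_of_nonneg Finset.inter_subset_right
          fun s _ _ => mul_nonneg (abs_nonneg _) (norm_nonneg _)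
  set F := Finset.univ.filter (fun i : Fin n => (I i ∩ x.support).Nonempty) with hF
  have hsum : ∑ i, ‖∑ s ∈ I i, x s • e s.length‖ ^ p
      = ∑ i ∈ F, ‖∑ s ∈ I i, x s • e s.length‖ ^ p := by
    refine (Finset.sum_filter_of_ne ?_).symm
    intro i _ hne0
    by_contra hne
    apply hne0
    have h0 : ∑ s ∈ I i, x s • e s.length = 0 := by
      refine Finset.sum_eq_zero fun s hs => ?_
      have hx0 : x s = 0 := by
        by_contra h
        exact hne ⟨s, Finset.mem_inter.2 ⟨hs, Finsupp.mem_support_iff.2 h⟩⟩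
      rw [hx0, zero_smul]
    rw [h0, norm_zero, Real.zero_rpow hp0]
  have hcard : F.card ≤ x.support.card := by
    have hmaps : ∀ i ∈ F,
        (if h : (I i ∩ x.support).Nonempty then h.choose else []) ∈ x.support := by
      intro i hi
      have hne : (I i ∩ x.support).Nonempty := (Finset.mem_filter.1 hi).2
      rw [dif_pos hne]
      exact (Finset.mem_inter.1 hne.choose_spec).2
    refine Finset.card_le_card_of_injOn _ hmaps ?_
    intro i hi j hj hij
    have hnei : (I i ∩ x.support).Nonempty := (Finset.mem_filter.1 hi).2
    have hnej : (I j ∩ x.support).Nonempty := (Finset.mem_filter.1 hj).2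
    simp only [dif_pos hnei, dif_pos hnej] at hij
    by_contra hne
    have h1 : hnei.choose ∈ I i := (Finset.mem_inter.1 hnei.choose_spec).1
    have h2 : hnei.choose ∈ I j := by
      rw [hij]; exact (Finset.mem_inter.1 hnej.choose_spec).1
    exact hinc i j hne hnei.choose (Finset.mem_coe.2 h1) hnei.choose (Finset.mem_coe.2 h2)
      (Or.inl (List.prefix_refl _))
  calc ∑ i, ‖∑ s ∈ I i, x s • e s.length‖ ^ p
      = ∑ i ∈ F, ‖∑ s ∈ I i, x s • e s.length‖ ^ p := hsum
    _ ≤ F.card • M ^ p := Finset.sum_le_card_nsmul _ _ _ fun i _ => hterm i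
    _ = (F.card : ℝ) * M ^ p := by rw [nsmul_eq_mul]
    _ ≤ (x.support.card : ℝ) * M ^ p := by
        have : (F.card : ℝ) ≤ x.support.card := Nat.cast_le.2 hcard
        exact mul_le_mul_of_nonneg_right this (Real.rpow_nonneg hM0 p)

lemma trim_segment (θ : Set (List ℕ)) {I : Finset (List ℕ)} (hI : IsSegment θ ↑I)
    (A : Finset (List ℕ)) :
    ∃ J : Finset (List ℕ), J ⊆ I ∧ IsSegment θ ↑J ∧
      (∀ s ∈ I, s ∈ A → s ∈ J) ∧
      (∀ l ∈ J, (∃ s ∈ A, s <+: l) ∧ ∃ t ∈ A, l <+: t) := by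
  classical
  set J := I.filter
    (fun l => (∃ s ∈ I, s ∈ A ∧ s <+: l) ∧ (∃ t ∈ I, t ∈ A ∧ l <+: t)) with hJ
  have hsub : J ⊆ I := Finset.filter_subset _ _
  refine ⟨J, hsub, ⟨?_, ?_, ?_⟩, ?_, ?_⟩
  · intro s hs
    exact hI.1 (Finset.mem_coe.2 (hsub (Finset.mem_coe.1 hs)))
  · intro s hs t ht
    exact hI.2.1 s (Finset.mem_coe.2 (hsub (Finset.mem_coe.1 hs)))
      t (Finset.mem_coe.2 (hsub (Finset.mem_coe.1 ht)))
  · intro s hs t ht l hl hsl hlt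
    have hsJ := Finset.mem_filter.1 (Finset.mem_coe.1 hs)
    have htJ := Finset.mem_filter.1 (Finset.mem_coe.1 ht)
    have hlI : l ∈ I := Finset.mem_coe.1 <|
      hI.2.2 s (Finset.mem_coe.2 hsJ.1) t (Finset.mem_coe.2 htJ.1) l hl hsl hlt
    obtain ⟨s₁, hs₁I, hs₁A, hs₁⟩ := hsJ.2.1
    obtain ⟨t₂, ht₂I, ht₂A, ht₂⟩ := htJ.2.2
    refine Finset.mem_coe.2 (Finset.mem_filter.2 ⟨hlI, ⟨s₁, hs₁I, hs₁A, hs₁.trans hsl⟩,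
      ⟨t₂, ht₂I, ht₂A, hlt.trans ht₂⟩⟩)
  · intro s hsI hsA
    exact Finset.mem_filter.2 ⟨hsI, ⟨s, hsI, hsA, List.prefix_refl _⟩,
      ⟨s, hsI, hsA, List.prefix_refl _⟩⟩
  · intro l hl
    have h := Finset.mem_filter.1 hl
    obtain ⟨s₁, _, hs₁A, hs₁⟩ := h.2.1
    obtain ⟨t₂, _, ht₂A, ht₂⟩ := h.2.2
    exact ⟨⟨s₁, hs₁A, hs₁⟩, ⟨t₂, ht₂A, ht₂⟩⟩

end Aux

/-- a semi-normalized block sequence with pairwise completely incomparable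
supports in the `ℓᵖ`-Baire sum `φ(θ)` of a basic sequence `E` is equivalent to the unit
vector basis of `ℓᵖ`. -/
theorem block_seq_incomparable_equiv_lp
    {E X : Type*} [NormedAddCommGroup E] [NormedSpace ℝ E]
    [NormedAddCommGroup X] [NormedSpace ℝ X] [CompleteSpace X]
    (p : ℝ) (hp : 1 ≤ p) (θ : Set (List ℕ)) (hθ : IsTree θ)
    (e : ℕ → E) (he : IsBasicSeq e)
    (u : List ℕ → X)
    (hnorm : ∀ z : List ℕ →₀ ℝ, ↑z.support ⊆ θ →
      ‖∑ s ∈ z.support, z s • u s‖ = lpBaireVal p θ e z)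
    (σ : ℕ ≃ List ℕ) (hσ : CompatibleEnum σ)
    (x : ℕ → (List ℕ →₀ ℝ))
    (hsupp : ∀ k, ↑(x k).support ⊆ θ)
    (hblock : ∀ k, ∀ s ∈ (x k).support, ∀ t ∈ (x (k + 1)).support, σ.symm s < σ.symm t)
    (hincomp : ∀ k l, k ≠ l → CompIncomp ↑(x k).support ↑(x l).support)
    (hsemi : ∃ a b : ℝ, 0 < a ∧ ∀ k,
      a ≤ ‖∑ s ∈ (x k).support, x k s • u s‖ ∧ ‖∑ s ∈ (x k).support, x k s • u s‖ ≤ b) :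
    ∃ C : ℝ, 1 ≤ C ∧ ∀ (n : ℕ) (a : ℕ → ℝ),
      C⁻¹ * (∑ k ∈ Finset.range n, |a k| ^ p) ^ p⁻¹ ≤
          ‖∑ k ∈ Finset.range n, a k • ∑ s ∈ (x k).support, x k s • u s‖ ∧
      ‖∑ k ∈ Finset.range n, a k • ∑ s ∈ (x k).support, x k s • u s‖ ≤
          C * (∑ k ∈ Finset.range n, |a k| ^ p) ^ p⁻¹ := by
  classical
  obtain ⟨a0, b, ha0, hab⟩ := hsemi
  have hp0 : (0:ℝ) < p := lt_of_lt_of_le one_pos hp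
  have hpne : p ≠ 0 := hp0.ne'
  set y : ℕ → X := fun k => ∑ s ∈ (x k).support, x k s • u s with hy
  have hb0 : 0 < b := lt_of_lt_of_le ha0 ((hab 0).1.trans (hab 0).2)
  have hyval : ∀ k, ‖y k‖ = sSup (lpSet p θ e (x k)) := fun k => hnorm (x k) (hsupp k)
  have hvanish : ∀ (k : ℕ) (s : List ℕ), (∃ t ∈ (x k).support, TreeComparable s t) →
      ∀ l, l ≠ k → x l s = 0 := by
    rintro k s ⟨t, ht, hcomp⟩ l hl
    by_contra h
    exact hincomp l k hl s (Finset.mem_coe.2 (Finsupp.mem_support_iff.2 h))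
      t (Finset.mem_coe.2 ht) hcomp
  set C : ℝ := max (max b (2 / a0)) 1 with hC
  have hC1 : 1 ≤ C := le_max_right _ _
  have hC0 : 0 < C := lt_of_lt_of_le one_pos hC1
  have hCb : b ≤ C := le_trans (le_max_left _ _) (le_max_left _ _)
  have h2a : (0:ℝ) < 2 / a0 := by positivity
  have hCinv : C⁻¹ ≤ a0 / 2 := by
    have h1 : 2 / a0 ≤ C := le_trans (le_max_right _ _) (le_max_left _ _)
    have h2 : C⁻¹ ≤ (2 / a0)⁻¹ := by
      exact inv_anti₀ h2a h1
    rwa [inv_div] at h2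
  refine ⟨C, hC1, fun n a => ?_⟩
  set S : ℝ := ∑ k ∈ Finset.range n, |a k| ^ p with hS
  have hS0 : 0 ≤ S := Finset.sum_nonneg fun k _ => Real.rpow_nonneg (abs_nonneg _) p
  set z : List ℕ →₀ ℝ := ∑ k ∈ Finset.range n, a k • x k with hzdef
  have hzsupp : ↑z.support ⊆ θ := by
    intro s hs
    have h1 := Finsupp.support_finset_sum (Finset.mem_coe.1 hs)
    obtain ⟨k, hk, hks⟩ := Finset.mem_biUnion.1 h1
    exact hsupp k (Finset.mem_coe.2 (Finsupp.support_smul hks))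
  have hz_apply : ∀ s, z s = ∑ k ∈ Finset.range n, a k * x k s := by
    intro s
    rw [hzdef, Finset.sum_apply']
    exact Finset.sum_congr rfl fun k _ => by rw [Finsupp.smul_apply, smul_eq_mul]
  have htot : ∀ w : List ℕ →₀ ℝ,
      ∑ s ∈ w.support, w s • u s = Finsupp.linearCombination ℝ u w := by
    intro w
    rw [Finsupp.linearCombination_apply, Finsupp.sum]
  have hz_total : ∑ s ∈ z.support, z s • u s = ∑ k ∈ Finset.range n, a k • y k := by
    rw [htot, hzdef, map_sum]
    exact Finset.sum_congr rfl fun k _ => by rw [map_smul, ← htot]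
  have hz_eq : ∀ k ∈ Finset.range n, ∀ s : List ℕ,
      (∃ t ∈ (x k).support, TreeComparable s t) → z s = a k * x k s := by
    intro k hk s hcomp
    rw [hz_apply]
    refine Finset.sum_eq_single_of_mem k hk fun l _ hlk => ?_
    rw [hvanish k s hcomp l hlk, mul_zero]
  -- the norm of the combination
  have hnorm_z : ‖∑ k ∈ Finset.range n, a k • y k‖ = sSup (lpSet p θ e z) := by
    rw [← hz_total]
    exact hnorm z hzsupp
  constructor
  · -- lower bound
    have hex : ∀ k : ℕ, ∃ (m : ℕ) (I : Fin m → Finset (List ℕ)),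
        (∀ i, IsSegment θ ↑(I i)) ∧ (∀ i j, i ≠ j → CompIncomp ↑(I i) ↑(I j)) ∧
        (k < n → a0 / 2 < (∑ i, ‖∑ s ∈ I i, x k s • e s.length‖ ^ p) ^ p⁻¹) := by
      intro k
      by_cases hk : k < n
      · have h1 : a0 / 2 < sSup (lpSet p θ e (x k)) := by
          rw [← hyval k]
          linarith [(hab k).1]
        obtain ⟨r, hrmem, hrlt⟩ := (lt_csSup_iff (bddAbove_lpSet hp θ e (x k))
          ⟨0, zero_mem_lpSet hpne θ e (x k)⟩).1 h1
        obtain ⟨m, I, hseg, hinc, rfl⟩ := hrmem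
        exact ⟨m, I, hseg, hinc, fun _ => hrlt⟩
      · exact ⟨0, fun i => i.elim0, fun i => i.elim0, fun i => i.elim0, fun h => absurd h hk⟩
    choose m I hseg hinc hval using hex
    have htrim : ∀ (k : ℕ) (i : Fin (m k)), ∃ J : Finset (List ℕ), J ⊆ I k i ∧
        IsSegment θ ↑J ∧ (∀ s ∈ I k i, s ∈ (x k).support → s ∈ J) ∧
        (∀ l ∈ J, (∃ s ∈ (x k).support, s <+: l) ∧ ∃ t ∈ (x k).support, l <+: t) :=
      fun k i => trim_segment θ (hseg k i) ((x k).support)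
    choose J hJsub hJseg hJmem hJcomp using htrim
    have hJsum : ∀ (k : ℕ) (i : Fin (m k)),
        ∑ s ∈ J k i, x k s • e s.length = ∑ s ∈ I k i, x k s • e s.length := by
      intro k i
      refine Finset.sum_subset (hJsub k i) fun s hs hns => ?_
      have hx0 : x k s = 0 := by
        by_contra h
        exact hns (hJmem k i s hs (Finsupp.mem_support_iff.2 h))
      rw [hx0, zero_smul]
    have hJcross : ∀ k k' : ℕ, k ≠ k' → ∀ (i : Fin (m k)) (i' : Fin (m k')),
        CompIncomp ↑(J k i) ↑(J k' i') := by
      intro k k' hkk i i' l hl t ht hcomp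
      obtain ⟨⟨s₁, hs₁A, hs₁⟩, ⟨t₂, ht₂A, ht₂⟩⟩ := hJcomp k i l (Finset.mem_coe.1 hl)
      obtain ⟨⟨s₁', hs₁'A, hs₁'⟩, ⟨t₂', ht₂'A, ht₂'⟩⟩ := hJcomp k' i' t (Finset.mem_coe.1 ht)
      rcases hcomp with h | h
      · exact hincomp k k' hkk s₁ (Finset.mem_coe.2 hs₁A) t₂' (Finset.mem_coe.2 ht₂'A)
          (Or.inl ((hs₁.trans h).trans ht₂'))
      · exact hincomp k' k hkk.symm s₁' (Finset.mem_coe.2 hs₁'A) t₂ (Finset.mem_coe.2 ht₂A)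
          (Or.inl ((hs₁'.trans h).trans ht₂))
    -- the combined family
    set K : (Σ k : Fin n, Fin (m ↑k)) → Finset (List ℕ) := fun q => J ↑q.1 q.2 with hK
    have hKseg : ∀ q, IsSegment θ ↑(K q) := fun q => hJseg _ _
    have hKinc : ∀ q q' : (Σ k : Fin n, Fin (m ↑k)), q ≠ q' →
        CompIncomp ↑(K q) ↑(K q') := by
      rintro ⟨k, i⟩ ⟨k', i'⟩ hne
      by_cases hk : k = k'
      · subst hk
        have hii : i ≠ i' := by
          intro h
          exact hne (by rw [h])
        intro s hs t ht
        exact hinc ↑k i i' hii s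
          (Finset.mem_coe.2 (hJsub _ _ (Finset.mem_coe.1 hs)))
          t (Finset.mem_coe.2 (hJsub _ _ (Finset.mem_coe.1 ht)))
      · exact hJcross ↑k ↑k' (fun h => hk (Fin.ext h)) i i'
    have hmem := mem_lpSet_of_fintype (p := p) (θ := θ) (e := e) (x := z) K hKseg hKinc
    have hle := le_csSup (bddAbove_lpSet hp θ e z) hmem
    rw [← hnorm_z] at hle
    refine le_trans ?_ hle
    -- compute the value of the combined family
    have hinner : ∀ (k : Fin n) (i : Fin (m ↑k)),
        ‖∑ s ∈ J ↑k i, z s • e s.length‖ ^ p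
          = |a ↑k| ^ p * ‖∑ s ∈ I ↑k i, x ↑k s • e s.length‖ ^ p := by
      intro k i
      have hzs : ∀ s ∈ J ↑k i, z s = a ↑k * x ↑k s := by
        intro s hs
        obtain ⟨-, ⟨t, htA, hlt⟩⟩ := hJcomp ↑k i s hs
        exact hz_eq ↑k (Finset.mem_range.2 k.isLt) s ⟨t, htA, Or.inl hlt⟩
      have h1 : ∑ s ∈ J ↑k i, z s • e s.length
          = a ↑k • ∑ s ∈ I ↑k i, x ↑k s • e s.length := by
        rw [← hJsum, Finset.smul_sum]
        exact Finset.sum_congr rfl fun s hs => by rw [hzs s hs, mul_smul]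
      rw [h1, norm_smul, Real.norm_eq_abs, Real.mul_rpow (abs_nonneg _) (norm_nonneg _)]
    have hval2 : ∑ q : (Σ k : Fin n, Fin (m ↑k)), ‖∑ s ∈ K q, z s • e s.length‖ ^ p
        = ∑ k : Fin n, |a ↑k| ^ p *
            ∑ i : Fin (m ↑k), ‖∑ s ∈ I ↑k i, x ↑k s • e s.length‖ ^ p := by
      rw [← Finset.univ_sigma_univ, Finset.sum_sigma]
      refine Finset.sum_congr rfl fun k _ => ?_
      rw [Finset.mul_sum]
      exact Finset.sum_congr rfl fun i _ => hinner k i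
    have hTlow : ∀ k : Fin n,
        (a0 / 2) ^ p ≤ ∑ i : Fin (m ↑k), ‖∑ s ∈ I ↑k i, x ↑k s • e s.length‖ ^ p := by
      intro k
      have hT0 : 0 ≤ ∑ i : Fin (m ↑k), ‖∑ s ∈ I ↑k i, x ↑k s • e s.length‖ ^ p :=
        Finset.sum_nonneg fun i _ => Real.rpow_nonneg (norm_nonneg _) p
      have h1 := (hval ↑k k.isLt).le
      have h2 := Real.rpow_le_rpow (by positivity) h1 hp0.le
      rwa [Real.rpow_inv_rpow hT0 hpne] at h2
    have hSineq : (a0 / 2) ^ p * S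
        ≤ ∑ q : (Σ k : Fin n, Fin (m ↑k)), ‖∑ s ∈ K q, z s • e s.length‖ ^ p := by
      rw [hval2, hS, ← Fin.sum_univ_eq_sum_range (fun k => |a k| ^ p) n, Finset.mul_sum]
      refine Finset.sum_le_sum fun k _ => ?_
      rw [mul_comm ((a0 / 2) ^ p)]
      exact mul_le_mul_of_nonneg_left (hTlow k) (Real.rpow_nonneg (abs_nonneg _) p)
    have hfinal : C⁻¹ * S ^ p⁻¹
        ≤ (∑ q : (Σ k : Fin n, Fin (m ↑k)), ‖∑ s ∈ K q, z s • e s.length‖ ^ p) ^ p⁻¹ := by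
      have h1 : C⁻¹ * S ^ p⁻¹ ≤ (a0 / 2) * S ^ p⁻¹ :=
        mul_le_mul_of_nonneg_right hCinv (Real.rpow_nonneg hS0 _)
      have h2 : (a0 / 2) * S ^ p⁻¹ = ((a0 / 2) ^ p * S) ^ p⁻¹ := by
        rw [Real.mul_rpow (Real.rpow_nonneg (by positivity) p) hS0,
          Real.rpow_rpow_inv (by positivity) hpne]
      refine h1.trans ?_
      rw [h2]
      exact Real.rpow_le_rpow (by positivity) hSineq (by positivity)
    exact hfinal
  · -- upper bound
    have hub : ∀ r ∈ lpSet p θ e z, r ≤ b * S ^ p⁻¹ := by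
      rintro r ⟨m, I, hseg, hinc, rfl⟩
      have hterm : ∀ i : Fin m, ‖∑ s ∈ I i, z s • e s.length‖ ^ p
          = ∑ k ∈ Finset.range n, |a k| ^ p * ‖∑ s ∈ I i, x k s • e s.length‖ ^ p := by
        intro i
        by_cases hcase : ∃ k ∈ Finset.range n, ∃ t ∈ I i, t ∈ (x k).support
        · obtain ⟨k, hk, t, htI, hts⟩ := hcase
          have hcompat : ∀ s ∈ I i, ∃ t' ∈ (x k).support, TreeComparable s t' :=
            fun s hs => ⟨t, hts, (hseg i).2.1 s (Finset.mem_coe.2 hs) t (Finset.mem_coe.2 htI)⟩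
          have hzero : ∀ l, l ≠ k → ∑ s ∈ I i, x l s • e s.length = 0 := by
            intro l hlk
            refine Finset.sum_eq_zero fun s hs => ?_
            rw [hvanish k s (hcompat s hs) l hlk, zero_smul]
          have hmain : ∑ s ∈ I i, z s • e s.length
              = a k • ∑ s ∈ I i, x k s • e s.length := by
            rw [Finset.smul_sum]
            exact Finset.sum_congr rfl fun s hs => by
              rw [hz_eq k hk s (hcompat s hs), mul_smul]
          rw [hmain, norm_smul, Real.norm_eq_abs,
            Real.mul_rpow (abs_nonneg _) (norm_nonneg _)]
          symm
          refine Finset.sum_eq_single_of_mem k hk fun l _ hlk => ?_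
          rw [hzero l hlk, norm_zero, Real.zero_rpow hpne, mul_zero]
        · push_neg at hcase
          have hz0 : ∀ s ∈ I i, z s = 0 := by
            intro s hs
            rw [hz_apply]
            refine Finset.sum_eq_zero fun k hk => ?_
            rw [Finsupp.notMem_support_iff.1 (hcase k hk s hs), mul_zero]
          have h1 : ∑ s ∈ I i, z s • e s.length = 0 :=
            Finset.sum_eq_zero fun s hs => by rw [hz0 s hs, zero_smul]
          rw [h1, norm_zero, Real.zero_rpow hpne]
          refine (Finset.sum_eq_zero fun k hk => ?_).symm
          have h2 : ∑ s ∈ I i, x k s • e s.length = 0 :=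
            Finset.sum_eq_zero fun s hs => by
              rw [Finsupp.notMem_support_iff.1 (hcase k hk s hs), zero_smul]
          rw [h2, norm_zero, Real.zero_rpow hpne, mul_zero]
      have hTk : ∀ k ∈ Finset.range n,
          ∑ i : Fin m, ‖∑ s ∈ I i, x k s • e s.length‖ ^ p ≤ b ^ p := by
        intro k _
        set T := ∑ i : Fin m, ‖∑ s ∈ I i, x k s • e s.length‖ ^ p with hT
        have hT0 : 0 ≤ T := Finset.sum_nonneg fun i _ => Real.rpow_nonneg (norm_nonneg _) p
        have hmem : T ^ p⁻¹ ∈ lpSet p θ e (x k) := ⟨m, I, hseg, hinc, rfl⟩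
        have h1 : T ^ p⁻¹ ≤ b := by
          refine (le_csSup (bddAbove_lpSet hp θ e (x k)) hmem).trans ?_
          rw [← hyval k]
          exact (hab k).2
        have h2 := Real.rpow_le_rpow (Real.rpow_nonneg hT0 _) h1 hp0.le
        rwa [Real.rpow_inv_rpow hT0 hpne] at h2
      have hsum_le : ∑ i : Fin m, ‖∑ s ∈ I i, z s • e s.length‖ ^ p ≤ b ^ p * S := by
        calc ∑ i : Fin m, ‖∑ s ∈ I i, z s • e s.length‖ ^ p
            = ∑ i : Fin m, ∑ k ∈ Finset.range n,
                |a k| ^ p * ‖∑ s ∈ I i, x k s • e s.length‖ ^ p :=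
              Finset.sum_congr rfl fun i _ => hterm i
          _ = ∑ k ∈ Finset.range n,
                |a k| ^ p * ∑ i : Fin m, ‖∑ s ∈ I i, x k s • e s.length‖ ^ p := by
              rw [Finset.sum_comm]
              exact Finset.sum_congr rfl fun k _ => (Finset.mul_sum _ _ _).symm
          _ ≤ ∑ k ∈ Finset.range n, |a k| ^ p * b ^ p :=
              Finset.sum_le_sum fun k hk =>
                mul_le_mul_of_nonneg_left (hTk k hk) (Real.rpow_nonneg (abs_nonneg _) p)
          _ = b ^ p * S := by
              rw [hS, Finset.mul_sum]
              exact Finset.sum_congr rfl fun k _ => mul_comm _ _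
      have h3 := Real.rpow_le_rpow
        (Finset.sum_nonneg fun i _ => Real.rpow_nonneg (norm_nonneg _) p) hsum_le
        (inv_nonneg.2 hp0.le)
      rwa [Real.mul_rpow (Real.rpow_nonneg hb0.le p) hS0,
        Real.rpow_rpow_inv hb0.le hpne] at h3
    rw [hnorm_z]
    refine (Real.sSup_le hub (by positivity)).trans ?_
    exact mul_le_mul_of_nonneg_right hCb (Real.rpow_nonneg hS0 _)
end

section
/- Let θ be a tree on ℕ and let (x_k) be a semi-normalized block sequence in the c₀-Baire sum φ₀(θ) of a basic sequence E whose supports are pairwise completely incomparable. Then (x_k) is equivalent to the standard unit vector basis of c₀. -/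
/-- The `c₀`-Baire sum norm of a finitely supported vector on the tree `θ`, relative to the
basic sequence `e` : the sup over segments `I` of `θ` of `‖Σ_{s∈I} x(s) e_{|s|}‖`. -/
noncomputable def c0BaireVal {E : Type*} [NormedAddCommGroup E] [NormedSpace ℝ E]
    (θ : Set (List ℕ)) (e : ℕ → E) (x : List ℕ →₀ ℝ) : ℝ :=
  sSup { r : ℝ | ∃ I : Finset (List ℕ), IsSegment θ ↑I ∧ r = ‖∑ s ∈ I, x s • e s.length‖ }

section Aux

variable {E : Type*} [NormedAddCommGroup E] [NormedSpace ℝ E]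

def segSet (θ : Set (List ℕ)) (e : ℕ → E) (w : List ℕ →₀ ℝ) : Set ℝ :=
  { r : ℝ | ∃ I : Finset (List ℕ), IsSegment θ ↑I ∧ r = ‖∑ s ∈ I, w s • e s.length‖ }

lemma c0BaireVal_eq (θ : Set (List ℕ)) (e : ℕ → E) (w : List ℕ →₀ ℝ) :
    c0BaireVal θ e w = sSup (segSet θ e w) := rfl

lemma empty_isSegment (θ : Set (List ℕ)) : IsSegment θ (↑(∅ : Finset (List ℕ))) := by
  refine ⟨by simp, by simp, by simp⟩

lemma zero_mem_segSet (θ : Set (List ℕ)) (e : ℕ → E) (w : List ℕ →₀ ℝ) :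
    (0:ℝ) ∈ segSet θ e w :=
  ⟨∅, empty_isSegment θ, by simp⟩

lemma bddAbove_segSet (θ : Set (List ℕ)) (e : ℕ → E) (w : List ℕ →₀ ℝ) :
    BddAbove (segSet θ e w) := by
  classical
  apply Set.Finite.bddAbove
  apply Set.Finite.subset (Set.finite_range
    (fun J : {J : Finset (List ℕ) // J ∈ w.support.powerset} =>
      ‖∑ s ∈ (J : Finset (List ℕ)), w s • e s.length‖))
  rintro r ⟨I, hI, rfl⟩
  refine ⟨⟨I ∩ w.support, by simp⟩, ?_⟩
  simp only
  congr 1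
  refine Finset.sum_subset Finset.inter_subset_left (fun s hs hns => ?_)
  have : w s = 0 := by
    by_contra h
    exact hns (Finset.mem_inter.mpr ⟨hs, Finsupp.mem_support_iff.mpr h⟩)
  rw [this, zero_smul]

lemma segVal_le (θ : Set (List ℕ)) (e : ℕ → E) (w : List ℕ →₀ ℝ) {I : Finset (List ℕ)}
    (hI : IsSegment θ ↑I) : ‖∑ s ∈ I, w s • e s.length‖ ≤ c0BaireVal θ e w :=
  le_csSup (bddAbove_segSet θ e w) ⟨I, hI, rfl⟩

lemma c0BaireVal_le (θ : Set (List ℕ)) (e : ℕ → E) (w : List ℕ →₀ ℝ) {c : ℝ}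
    (h : ∀ I : Finset (List ℕ), IsSegment θ ↑I → ‖∑ s ∈ I, w s • e s.length‖ ≤ c) :
    c0BaireVal θ e w ≤ c := by
  refine csSup_le ⟨0, zero_mem_segSet θ e w⟩ ?_
  rintro r ⟨I, hI, rfl⟩
  exact h I hI

lemma sum_support_eq {X : Type*} [NormedAddCommGroup X] [NormedSpace ℝ X]
    (u : List ℕ → X) (w : List ℕ →₀ ℝ) :
    ∑ s ∈ w.support, w s • u s = Finsupp.linearCombination ℝ u w := by
  rw [Finsupp.linearCombination_apply, Finsupp.sum]

end Aux

/-- a semi-normalized block sequence with pairwise completely incomparable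
supports in the `c₀`-Baire sum `φ₀(θ)` of a basic sequence `E` is equivalent to the unit
vector basis of `c₀`. -/
theorem block_seq_incomparable_equiv_c0
    {E X : Type*} [NormedAddCommGroup E] [NormedSpace ℝ E]
    [NormedAddCommGroup X] [NormedSpace ℝ X] [CompleteSpace X]
    (θ : Set (List ℕ)) (hθ : IsTree θ)
    (e : ℕ → E) (he : IsBasicSeq e)
    (u : List ℕ → X)
    (hnorm : ∀ z : List ℕ →₀ ℝ, ↑z.support ⊆ θ →
      ‖∑ s ∈ z.support, z s • u s‖ = c0BaireVal θ e z)
    (σ : ℕ ≃ List ℕ) (hσ : CompatibleEnum σ)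
    (x : ℕ → (List ℕ →₀ ℝ))
    (hsupp : ∀ k, ↑(x k).support ⊆ θ)
    (hblock : ∀ k, ∀ s ∈ (x k).support, ∀ t ∈ (x (k + 1)).support, σ.symm s < σ.symm t)
    (hincomp : ∀ k l, k ≠ l → CompIncomp ↑(x k).support ↑(x l).support)
    (hsemi : ∃ a b : ℝ, 0 < a ∧ ∀ k,
      a ≤ ‖∑ s ∈ (x k).support, x k s • u s‖ ∧ ‖∑ s ∈ (x k).support, x k s • u s‖ ≤ b) :
    ∃ C : ℝ, 1 ≤ C ∧ ∀ (n : ℕ) (a : ℕ → ℝ),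
      C⁻¹ * (⨆ k ∈ Finset.range n, |a k|) ≤
          ‖∑ k ∈ Finset.range n, a k • ∑ s ∈ (x k).support, x k s • u s‖ ∧
      ‖∑ k ∈ Finset.range n, a k • ∑ s ∈ (x k).support, x k s • u s‖ ≤
          C * (⨆ k ∈ Finset.range n, |a k|) := by
    classical
  obtain ⟨α, β, hα, hαβ⟩ := hsemi
  have hβ : 0 < β := lt_of_lt_of_le hα ((hαβ 0).1.trans (hαβ 0).2)
  refine ⟨max 1 (max β (2/α)), le_max_left _ _, ?_⟩
  set C := max 1 (max β (2/α)) with hC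
  have hC1 : (1:ℝ) ≤ C := le_max_left _ _
  have hCβ : β ≤ C := le_trans (le_max_left _ _) (le_max_right _ _)
  have hCα : 2/α ≤ C := le_trans (le_max_right _ _) (le_max_right _ _)
  have hC0 : (0:ℝ) < C := lt_of_lt_of_le one_pos hC1
  intro n a
  set M := ⨆ k ∈ Finset.range n, |a k| with hM
  have hM0 : 0 ≤ M := Real.iSup_nonneg fun k => Real.iSup_nonneg fun _ => abs_nonneg _
  have hMub : ∀ {c : ℝ}, 0 ≤ c → (∀ k ∈ Finset.range n, |a k| ≤ c) → M ≤ c := by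
    intro c hc h
    exact Real.iSup_le (fun k => Real.iSup_le (fun hk => h k hk) hc) hc
  have hMle : ∀ k ∈ Finset.range n, |a k| ≤ M := by
    intro k hk
    have hbdd : BddAbove (Set.range fun k => ⨆ _ : k ∈ Finset.range n, |a k|) := by
      refine ⟨∑ j ∈ Finset.range n, |a j|, ?_⟩
      rintro r ⟨j, rfl⟩
      show (⨆ _ : j ∈ Finset.range n, |a j|) ≤ ∑ j ∈ Finset.range n, |a j|
      by_cases hj : j ∈ Finset.range n
      · exact Real.iSup_le (fun _ => Finset.single_le_sum
          (fun i _ => abs_nonneg (a i)) hj)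
          (Finset.sum_nonneg fun i _ => abs_nonneg (a i))
      · exact Real.iSup_le (fun h => absurd h hj)
          (Finset.sum_nonneg fun i _ => abs_nonneg (a i))
    have h1 : |a k| ≤ ⨆ _ : k ∈ Finset.range n, |a k| :=
      le_ciSup (f := fun _ : k ∈ Finset.range n => |a k|)
        ⟨|a k|, by rintro r ⟨_, rfl⟩; exact le_rfl⟩ hk
    exact h1.trans (le_ciSup hbdd k)
  -- the combined vector
  set z : List ℕ →₀ ℝ := ∑ k ∈ Finset.range n, a k • x k with hz
  have hzapp : ∀ s, z s = ∑ k ∈ Finset.range n, a k * x k s := by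
    intro s
    rw [hz, Finset.sum_apply']
    simp [Finsupp.smul_apply]
  have hzsupp : ↑z.support ⊆ θ := by
    intro s hs
    have hzs : z s ≠ 0 := Finsupp.mem_support_iff.mp hs
    by_contra hsθ
    apply hzs
    rw [hzapp]
    refine Finset.sum_eq_zero fun k _ => ?_
    have : x k s = 0 := by
      by_contra h
      exact hsθ (hsupp k (Finsupp.mem_support_iff.mpr h))
    rw [this, mul_zero]
  have hnormk : ∀ k, ‖∑ s ∈ (x k).support, x k s • u s‖ = c0BaireVal θ e (x k) :=
    fun k => hnorm (x k) (hsupp k)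
  have hnormz : ‖∑ k ∈ Finset.range n, a k • ∑ s ∈ (x k).support, x k s • u s‖
      = c0BaireVal θ e z := by
    rw [← hnorm z hzsupp]
    congr 1
    calc ∑ k ∈ Finset.range n, a k • ∑ s ∈ (x k).support, x k s • u s
        = ∑ k ∈ Finset.range n, a k • Finsupp.linearCombination ℝ u (x k) := by
          simp only [sum_support_eq]
      _ = Finsupp.linearCombination ℝ u z := by
          rw [hz, map_sum]
          simp [map_smul]
      _ = ∑ s ∈ z.support, z s • u s := (sum_support_eq u z).symm
  have hseg : ∀ I : Finset (List ℕ), IsSegment θ ↑I →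
      ∑ s ∈ I, z s • e s.length
        = ∑ k ∈ Finset.range n, a k • ∑ s ∈ I, x k s • e s.length := by
    intro I hI
    simp only [hzapp]
    calc ∑ s ∈ I, (∑ k ∈ Finset.range n, a k * x k s) • e s.length
        = ∑ s ∈ I, ∑ k ∈ Finset.range n, (a k * x k s) • e s.length := by
          simp [Finset.sum_smul]
      _ = ∑ k ∈ Finset.range n, ∑ s ∈ I, (a k * x k s) • e s.length := Finset.sum_comm
      _ = _ := by simp [Finset.smul_sum, mul_smul]
  have hone : ∀ I : Finset (List ℕ), IsSegment θ ↑I → ∀ k l, k ≠ l →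
      ∀ s ∈ I, x k s ≠ 0 → ∀ t ∈ I, x l t ≠ 0 → False := by
    intro I hI k l hkl s hsI hs t htI ht
    exact hincomp k l hkl s (Finset.mem_coe.mpr (Finsupp.mem_support_iff.mpr hs))
      t (Finset.mem_coe.mpr (Finsupp.mem_support_iff.mpr ht))
      (hI.2.1 s (Finset.mem_coe.mpr hsI) t (Finset.mem_coe.mpr htI))
  have hwit : ∀ (I : Finset (List ℕ)) (k : ℕ), (∑ s ∈ I, x k s • e s.length) ≠ 0 →
      ∃ s ∈ I, x k s ≠ 0 := by
    intro I k h
    by_contra hc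
    push_neg at hc
    exact h (Finset.sum_eq_zero fun s hs => by rw [hc s hs, zero_smul])
  -- upper bound
  have hupper : c0BaireVal θ e z ≤ C * M := by
    apply c0BaireVal_le
    intro I hI
    rw [hseg I hI]
    by_cases hex : ∃ k ∈ Finset.range n, (∑ s ∈ I, x k s • e s.length) ≠ 0
    · obtain ⟨k₁, hk₁, hv⟩ := hex
      have hzero : ∀ l ∈ Finset.range n, l ≠ k₁ →
          a l • (∑ s ∈ I, x l s • e s.length) = 0 := by
        intro l hl hlk
        obtain ⟨s, hsI, hs⟩ := hwit I k₁ hv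
        by_cases hvl : (∑ s ∈ I, x l s • e s.length) = 0
        · rw [hvl, smul_zero]
        · obtain ⟨t, htI, ht⟩ := hwit I l hvl
          exact (hone I hI l k₁ hlk t htI ht s hsI hs).elim
      rw [Finset.sum_eq_single_of_mem k₁ hk₁ hzero, norm_smul, Real.norm_eq_abs]
      have h1 : ‖∑ s ∈ I, x k₁ s • e s.length‖ ≤ β := by
        refine (segVal_le θ e (x k₁) hI).trans ?_
        rw [← hnormk k₁]
        exact (hαβ k₁).2
      calc |a k₁| * ‖∑ s ∈ I, x k₁ s • e s.length‖
          ≤ M * β := mul_le_mul (hMle k₁ hk₁) h1 (norm_nonneg _) hM0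
        _ ≤ M * C := mul_le_mul_of_nonneg_left hCβ hM0
        _ = C * M := mul_comm _ _
    · push_neg at hex
      rw [Finset.sum_eq_zero (fun k hk => by rw [hex k hk, smul_zero]), norm_zero]
      exact mul_nonneg hC0.le hM0
  -- lower bound
  have hlower : C⁻¹ * M ≤ c0BaireVal θ e z := by
    rcases Nat.eq_zero_or_pos n with hn | hn
    · have hM0' : M = 0 := le_antisymm (hMub le_rfl (by simp [hn])) hM0
      rw [hM0', mul_zero]
      exact le_csSup (bddAbove_segSet θ e z) (zero_mem_segSet θ e z)
    · obtain ⟨k₀, hk₀, hmax⟩ := Finset.exists_max_image (Finset.range n) (fun k => |a k|)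
        ⟨0, Finset.mem_range.mpr hn⟩
      have hMk : M = |a k₀| := le_antisymm (hMub (abs_nonneg _) hmax) (hMle k₀ hk₀)
      have hlt : α/2 < c0BaireVal θ e (x k₀) := by
        have h := (hαβ k₀).1
        rw [hnormk k₀] at h
        linarith
      obtain ⟨r, ⟨I, hI, rfl⟩, hr⟩ :=
        exists_lt_of_lt_csSup ⟨0, zero_mem_segSet θ e (x k₀)⟩ hlt
      have hvne : (∑ s ∈ I, x k₀ s • e s.length) ≠ 0 := by
        intro h
        rw [h, norm_zero] at hr
        linarith
      have hzeq : ∑ s ∈ I, z s • e s.length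
          = a k₀ • ∑ s ∈ I, x k₀ s • e s.length := by
        rw [hseg I hI]
        refine Finset.sum_eq_single_of_mem k₀ hk₀ ?_
        intro l hl hlk
        by_cases hvl : (∑ s ∈ I, x l s • e s.length) = 0
        · rw [hvl, smul_zero]
        · obtain ⟨t, htI, ht⟩ := hwit I l hvl
          obtain ⟨s, hsI, hs⟩ := hwit I k₀ hvne
          exact (hone I hI l k₀ hlk t htI ht s hsI hs).elim
      have hkey : C⁻¹ * M ≤ ‖∑ s ∈ I, z s • e s.length‖ := by
        rw [hzeq, norm_smul, Real.norm_eq_abs, hMk]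
        have hCinv : C⁻¹ ≤ α/2 := by
          have h2α : (0:ℝ) < 2/α := by positivity
          have := inv_anti₀ h2α hCα
          rwa [inv_div] at this
        calc C⁻¹ * |a k₀| ≤ (α/2) * |a k₀| :=
              mul_le_mul_of_nonneg_right hCinv (abs_nonneg _)
          _ ≤ ‖∑ s ∈ I, x k₀ s • e s.length‖ * |a k₀| :=
              mul_le_mul_of_nonneg_right hr.le (abs_nonneg _)
          _ = |a k₀| * ‖∑ s ∈ I, x k₀ s • e s.length‖ := mul_comm _ _
      exact hkey.trans (segVal_le θ e z hI)
  rw [hnormz]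
  exact ⟨hlower, hupper⟩
end

section
/- Let θ be a tree on ℕ with the parameterized Tsirelson norm ‖·‖_θ, and let (yₙ) be a normalized block sequence yₙ = Σ_{i=pₙ+1}^{p_{n+1}} bᵢ e_{sᵢ} of the standard basis (e_{sₙ}) of the completion of (c₀₀(θ), ‖·‖_θ), whose supports are pairwise completely incomparable. Then for every sequence of scalars (aₙ), ‖Σₙ aₙ e_{s_{pₙ+1}}‖_θ ≤ ‖Σₙ aₙ yₙ‖_θ. -/
/-- Sup norm of a finitely supported vector. -/
noncomputable def supVal (x : List ℕ →₀ ℝ) : ℝ := ⨆ s : List ℕ, |x s|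

/-- Admissible families for the parameterized Tsirelson norm: `k` pairwise completely
incomparable nonempty finite subsets of `θ`, successive for the enumeration `σ`, with
`k ≤ E₁`. -/
def TsAdmissible (θ : Set (List ℕ)) (σ : ℕ ≃ List ℕ) (k : ℕ)
    (E : Fin k → Finset (List ℕ)) : Prop :=
  (∀ i, (E i).Nonempty ∧ ↑(E i) ⊆ θ) ∧
  (∀ i j : Fin k, i < j → ∀ s ∈ E i, ∀ t ∈ E j, σ.symm s < σ.symm t) ∧
  (∀ i, ∀ s ∈ E i, k ≤ σ.symm s) ∧
  (∀ i j : Fin k, i ≠ j → CompIncomp ↑(E i) ↑(E j))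

/-- Admissible families for the unrestricted Tsirelson norm (no complete-incomparability
requirement). -/
def TAdmissible (θ : Set (List ℕ)) (σ : ℕ ≃ List ℕ) (k : ℕ)
    (E : Fin k → Finset (List ℕ)) : Prop :=
  (∀ i, (E i).Nonempty ∧ ↑(E i) ⊆ θ) ∧
  (∀ i j : Fin k, i < j → ∀ s ∈ E i, ∀ t ∈ E j, σ.symm s < σ.symm t) ∧
  (∀ i, ∀ s ∈ E i, k ≤ σ.symm s)

/-- The inductively defined parameterized Tsirelson norms `‖·‖_{θ,m}`. -/
noncomputable def tsNorm (θ : Set (List ℕ)) (σ : ℕ ≃ List ℕ) : ℕ → (List ℕ →₀ ℝ) → ℝ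
  | 0, x => supVal x
  | m + 1, x => max (supVal x)
      (2⁻¹ * sSup { r : ℝ | ∃ (k : ℕ) (E : Fin k → Finset (List ℕ)),
        TsAdmissible θ σ k E ∧ r = ∑ i, tsNorm θ σ m (x.filter (· ∈ E i)) })

/-- The parameterized Tsirelson norm `‖x‖_θ = limₘ ‖x‖_{θ,m}`. -/
noncomputable def tsNormLim (θ : Set (List ℕ)) (σ : ℕ ≃ List ℕ) (x : List ℕ →₀ ℝ) : ℝ :=
  ⨆ m : ℕ, tsNorm θ σ m x

/-- The inductively defined unrestricted Tsirelson norms. -/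
noncomputable def tNorm (θ : Set (List ℕ)) (σ : ℕ ≃ List ℕ) : ℕ → (List ℕ →₀ ℝ) → ℝ
  | 0, x => supVal x
  | m + 1, x => max (supVal x)
      (2⁻¹ * sSup { r : ℝ | ∃ (k : ℕ) (E : Fin k → Finset (List ℕ)),
        TAdmissible θ σ k E ∧ r = ∑ i, tNorm θ σ m (x.filter (· ∈ E i)) })

noncomputable def tNormLim (θ : Set (List ℕ)) (σ : ℕ ≃ List ℕ) (x : List ℕ →₀ ℝ) : ℝ :=
  ⨆ m : ℕ, tNorm θ σ m x

/-!
Write `s_k` for `σ (p k + 1)`. By induction on `m`, for every finite `S` we show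
`‖Σ_{k ∈ S} a_k e_{s_k}‖_{θ,m} ≤ ‖Σ_{k ∈ S} a_k y_k‖_θ`. The sup-norm term is bounded by
`|a_k| = ‖a_k y_k‖_θ`, and `a_k y_k` is a restriction of the right-hand vector since the
supports of the `y_k` are disjoint. For an admissible family `(E_i)`, the restriction of the
left-hand vector to `E_i` is the vector of the same shape over `S_i = {k ∈ S | s_k ∈ E_i}`.
The unions `F_i` of the supports of `y_k`, `k ∈ S_i`, again form an admissible family once the
empty ones are dropped: `y_k` lives on the indices `(p_k, p_{k+1}]`, so the `F_i` are successive
and start no earlier than `E_i`, and they are completely incomparable because the supports are.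
Restricted to `F_i`, the right-hand vector is the one over `S_i`, which closes the induction.
-/

open Filter Topology

noncomputable def l1Norm (x : List ℕ →₀ ℝ) : ℝ := ∑ s ∈ x.support, |x s|

lemma l1Norm_nonneg (x : List ℕ →₀ ℝ) : 0 ≤ l1Norm x :=
  Finset.sum_nonneg fun _ _ => abs_nonneg _

lemma abs_apply_le_l1Norm (x : List ℕ →₀ ℝ) (s : List ℕ) : |x s| ≤ l1Norm x := by
  by_cases hs : s ∈ x.support
  · exact Finset.single_le_sum (f := fun t => |x t|) (fun _ _ => abs_nonneg _) hs
  · rw [Finsupp.notMem_support_iff.mp hs, abs_zero]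
    exact l1Norm_nonneg x

lemma l1Norm_filter (x : List ℕ →₀ ℝ) (P : List ℕ → Prop) [DecidablePred P] :
    l1Norm (x.filter P) = ∑ s ∈ x.support.filter P, |x s| := by
  rw [l1Norm, Finsupp.support_filter]
  exact Finset.sum_congr rfl fun s hs => by
    rw [Finsupp.filter_apply_pos _ _ (Finset.mem_filter.mp hs).2]

lemma sum_l1Norm_filter_le (x : List ℕ →₀ ℝ) {k : ℕ} {E : Fin k → Finset (List ℕ)}
    (hE : Pairwise fun i j => Disjoint (E i) (E j)) :
    ∑ i, l1Norm (x.filter (· ∈ E i)) ≤ l1Norm x := by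
  simp only [l1Norm_filter]
  have hdisj : ((Finset.univ : Finset (Fin k)) : Set (Fin k)).PairwiseDisjoint
      fun i => x.support.filter (· ∈ E i) := fun i _ j _ hij =>
    Finset.disjoint_filter.mpr fun _ _ hi hj => Finset.disjoint_left.mp (hE hij) hi hj
  rw [← Finset.sum_biUnion hdisj]
  exact Finset.sum_le_sum_of_subset_of_nonneg
    (Finset.biUnion_subset.mpr fun _ _ => Finset.filter_subset _ _)
    (fun _ _ _ => abs_nonneg _)

lemma abs_le_supVal (x : List ℕ →₀ ℝ) (s : List ℕ) : |x s| ≤ supVal x :=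
  le_ciSup ⟨l1Norm x, by rintro r ⟨t, rfl⟩; exact abs_apply_le_l1Norm x t⟩ s

lemma supVal_nonneg (x : List ℕ →₀ ℝ) : 0 ≤ supVal x :=
  (abs_nonneg _).trans (abs_le_supVal x [])

lemma CompIncomp.disjoint {A B : Set (List ℕ)} (h : CompIncomp A B) : Disjoint A B :=
  Set.disjoint_left.mpr fun s hsA hsB => h s hsA s hsB (Or.inl (List.prefix_refl s))

lemma TsAdmissible.pairwise_disjoint {θ : Set (List ℕ)} {σ : ℕ ≃ List ℕ} {k : ℕ}
    {E : Fin k → Finset (List ℕ)} (hE : TsAdmissible θ σ k E) :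
    Pairwise fun i j => Disjoint (E i) (E j) :=
  fun _ _ hij => Finset.disjoint_coe.mp (hE.2.2.2 _ _ hij).disjoint

def TsSemiAdmissible (θ : Set (List ℕ)) (σ : ℕ ≃ List ℕ) (k : ℕ)
    (E : Fin k → Finset (List ℕ)) : Prop :=
  (∀ i, ↑(E i) ⊆ θ) ∧
  (∀ i j : Fin k, i < j → ∀ s ∈ E i, ∀ t ∈ E j, σ.symm s < σ.symm t) ∧
  (∀ i, ∀ s ∈ E i, k ≤ σ.symm s) ∧
  (∀ i j : Fin k, i ≠ j → CompIncomp ↑(E i) ↑(E j))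

section TsNorm

variable {θ : Set (List ℕ)} {σ : ℕ ≃ List ℕ}

def tsSums (θ : Set (List ℕ)) (σ : ℕ ≃ List ℕ) (m : ℕ) (x : List ℕ →₀ ℝ) : Set ℝ :=
  { r | ∃ (k : ℕ) (E : Fin k → Finset (List ℕ)),
        TsAdmissible θ σ k E ∧ r = ∑ i, tsNorm θ σ m (x.filter (· ∈ E i)) }

lemma tsNorm_succ (m : ℕ) (x : List ℕ →₀ ℝ) :
    tsNorm θ σ (m + 1) x = max (supVal x) (2⁻¹ * sSup (tsSums θ σ m x)) := rfl

lemma supVal_le_tsNorm (m : ℕ) (x : List ℕ →₀ ℝ) : supVal x ≤ tsNorm θ σ m x := by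
  cases m with
  | zero => exact le_rfl
  | succ m => exact le_max_left _ _

lemma tsNorm_nonneg (m : ℕ) (x : List ℕ →₀ ℝ) : 0 ≤ tsNorm θ σ m x :=
  (supVal_nonneg x).trans (supVal_le_tsNorm m x)

lemma tsNorm_succ_le_of {m : ℕ} {x : List ℕ →₀ ℝ} {C : ℝ} (hsup : supVal x ≤ C)
    (hsums : ∀ k E, TsAdmissible θ σ k E → ∑ i, tsNorm θ σ m (x.filter (· ∈ E i)) ≤ 2 * C) :
    tsNorm θ σ (m + 1) x ≤ C := by
  have : sSup (tsSums θ σ m x) ≤ 2 * C :=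
    Real.sSup_le (by rintro r ⟨k, E, hE, rfl⟩; exact hsums k E hE)
      (by linarith [supVal_nonneg x])
  rw [tsNorm_succ]
  exact max_le hsup (by linarith)

lemma tsNorm_le_l1Norm (m : ℕ) (x : List ℕ →₀ ℝ) : tsNorm θ σ m x ≤ l1Norm x := by
  induction m generalizing x with
  | zero => exact ciSup_le (abs_apply_le_l1Norm x)
  | succ m ih =>
    refine tsNorm_succ_le_of (ciSup_le (abs_apply_le_l1Norm x)) fun k E hE => ?_
    calc ∑ i, tsNorm θ σ m (x.filter (· ∈ E i))
        ≤ ∑ i, l1Norm (x.filter (· ∈ E i)) := Finset.sum_le_sum fun i _ => ih _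
      _ ≤ l1Norm x := sum_l1Norm_filter_le x hE.pairwise_disjoint
      _ ≤ 2 * l1Norm x := by linarith [l1Norm_nonneg x]

lemma tsNorm_zero (m : ℕ) : tsNorm θ σ m 0 = 0 :=
  le_antisymm (by simpa [l1Norm] using tsNorm_le_l1Norm (θ := θ) (σ := σ) m 0)
    (tsNorm_nonneg m 0)

lemma TsAdmissible.sum_tsNorm_filter_le {m k : ℕ} {E : Fin k → Finset (List ℕ)}
    (hE : TsAdmissible θ σ k E) (x : List ℕ →₀ ℝ) :
    ∑ i, tsNorm θ σ m (x.filter (· ∈ E i)) ≤ 2 * tsNorm θ σ (m + 1) x := by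
  have hbdd : BddAbove (tsSums θ σ m x) := by
    refine ⟨l1Norm x, ?_⟩
    rintro r ⟨k, E, hE, rfl⟩
    exact (Finset.sum_le_sum fun i _ => tsNorm_le_l1Norm m _).trans
      (sum_l1Norm_filter_le x hE.pairwise_disjoint)
  have hmem := le_csSup hbdd ⟨k, E, hE, rfl⟩
  have hhalf : 2⁻¹ * sSup (tsSums θ σ m x) ≤ tsNorm θ σ (m + 1) x := le_max_right _ _
  linarith

-- Dropping the empty sets of a semi-admissible family leaves an admissible one.
lemma TsSemiAdmissible.sum_tsNorm_filter_le {m k : ℕ} {E : Fin k → Finset (List ℕ)}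
    (hE : TsSemiAdmissible θ σ k E) (x : List ℕ →₀ ℝ) :
    ∑ i, tsNorm θ σ m (x.filter (· ∈ E i)) ≤ 2 * tsNorm θ σ (m + 1) x := by
  set T := Finset.univ.filter fun i => (E i).Nonempty
  set e := T.orderEmbOfFin rfl
  have hcard : T.card ≤ k := by simpa using Finset.card_le_univ T
  have hadm : TsAdmissible θ σ T.card fun j => E (e j) := by
    refine ⟨fun j => ⟨(Finset.mem_filter.mp (T.orderEmbOfFin_mem rfl j)).2, hE.1 _⟩,
      fun j j' hjj' => hE.2.1 _ _ (e.strictMono hjj'),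
      fun j s hs => hcard.trans (hE.2.2.1 _ s hs),
      fun j j' hjj' => hE.2.2.2 _ _ (e.injective.ne hjj')⟩
  calc ∑ i, tsNorm θ σ m (x.filter (· ∈ E i))
      = ∑ i ∈ T, tsNorm θ σ m (x.filter (· ∈ E i)) := by
        refine (Finset.sum_subset (Finset.subset_univ T) fun i _ hi => ?_).symm
        have hempty : E i = ∅ := by simpa [T] using hi
        rw [(Finsupp.filter_eq_zero_iff _ _).mpr fun s hs => by simp [hempty] at hs, tsNorm_zero]
    _ = ∑ i ∈ Finset.univ.image e, tsNorm θ σ m (x.filter (· ∈ E i)) := by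
        rw [T.image_orderEmbOfFin_univ rfl]
    _ = ∑ j, tsNorm θ σ m (x.filter (· ∈ E (e j))) :=
        Finset.sum_image fun _ _ _ _ h => e.injective h
    _ ≤ 2 * tsNorm θ σ (m + 1) x := hadm.sum_tsNorm_filter_le x

lemma tsNorm_le_succ (m : ℕ) (x : List ℕ →₀ ℝ) : tsNorm θ σ m x ≤ tsNorm θ σ (m + 1) x := by
  induction m generalizing x with
  | zero => exact supVal_le_tsNorm 1 x
  | succ m ih =>
    exact tsNorm_succ_le_of (supVal_le_tsNorm _ x) fun k E hE =>
      (Finset.sum_le_sum fun i _ => ih _).trans (hE.sum_tsNorm_filter_le x)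

lemma tsNorm_filter_le (P : List ℕ → Prop) [DecidablePred P] (m : ℕ) (x : List ℕ →₀ ℝ) :
    tsNorm θ σ m (x.filter P) ≤ tsNorm θ σ m x := by
  have hsup : ∀ x : List ℕ →₀ ℝ, supVal (x.filter P) ≤ supVal x := fun x =>
    ciSup_le fun s => by
      rw [Finsupp.filter_apply]
      split_ifs
      · exact abs_le_supVal x s
      · simpa using supVal_nonneg x
  induction m generalizing x with
  | zero => exact hsup x
  | succ m ih =>
    refine tsNorm_succ_le_of ((hsup x).trans (supVal_le_tsNorm _ x)) fun k E hE => ?_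
    have hcomm : ∀ i, (x.filter P).filter (· ∈ E i) = (x.filter (· ∈ E i)).filter P := by
      intro i; ext s; simp only [Finsupp.filter_apply]; split_ifs <;> rfl
    simp only [hcomm]
    exact (Finset.sum_le_sum fun i _ => ih _).trans (hE.sum_tsNorm_filter_le x)

lemma tsNorm_smul_le (c : ℝ) (m : ℕ) (x : List ℕ →₀ ℝ) :
    tsNorm θ σ m (c • x) ≤ |c| * tsNorm θ σ m x := by
  have hsup : ∀ x : List ℕ →₀ ℝ, supVal (c • x) ≤ |c| * supVal x := fun x =>
    ciSup_le fun s => by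
      rw [Finsupp.smul_apply, smul_eq_mul, abs_mul]
      exact mul_le_mul_of_nonneg_left (abs_le_supVal x s) (abs_nonneg c)
  induction m generalizing x with
  | zero => exact hsup x
  | succ m ih =>
    refine tsNorm_succ_le_of
      ((hsup x).trans (mul_le_mul_of_nonneg_left (supVal_le_tsNorm _ x) (abs_nonneg c)))
      fun k E hE => ?_
    calc ∑ i, tsNorm θ σ m ((c • x).filter (· ∈ E i))
        = ∑ i, tsNorm θ σ m (c • x.filter (· ∈ E i)) := by simp only [Finsupp.filter_smul]
      _ ≤ ∑ i, |c| * tsNorm θ σ m (x.filter (· ∈ E i)) := Finset.sum_le_sum fun i _ => ih _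
      _ = |c| * ∑ i, tsNorm θ σ m (x.filter (· ∈ E i)) := (Finset.mul_sum _ _ _).symm
      _ ≤ |c| * (2 * tsNorm θ σ (m + 1) x) :=
          mul_le_mul_of_nonneg_left (hE.sum_tsNorm_filter_le x) (abs_nonneg c)
      _ = 2 * (|c| * tsNorm θ σ (m + 1) x) := by ring

lemma tsNorm_smul (c : ℝ) (m : ℕ) (x : List ℕ →₀ ℝ) :
    tsNorm θ σ m (c • x) = |c| * tsNorm θ σ m x := by
  refine le_antisymm (tsNorm_smul_le c m x) ?_
  rcases eq_or_ne c 0 with rfl | hc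
  · simpa using tsNorm_nonneg m _
  have h := tsNorm_smul_le (θ := θ) (σ := σ) c⁻¹ m (c • x)
  rw [smul_smul, inv_mul_cancel₀ hc, one_smul, abs_inv] at h
  rwa [← le_inv_mul_iff₀ (abs_pos.mpr hc)]

lemma tsNorm_mono (x : List ℕ →₀ ℝ) : Monotone fun m => tsNorm θ σ m x :=
  monotone_nat_of_le_succ fun m => tsNorm_le_succ m x

lemma bddAbove_range_tsNorm (x : List ℕ →₀ ℝ) : BddAbove (Set.range fun m => tsNorm θ σ m x) :=
  ⟨l1Norm x, by rintro r ⟨m, rfl⟩; exact tsNorm_le_l1Norm m x⟩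

lemma tendsto_tsNorm_tsNormLim (x : List ℕ →₀ ℝ) :
    Tendsto (fun m => tsNorm θ σ m x) atTop (𝓝 (tsNormLim θ σ x)) :=
  tendsto_atTop_ciSup (tsNorm_mono x) (bddAbove_range_tsNorm x)

lemma tsNorm_le_tsNormLim (m : ℕ) (x : List ℕ →₀ ℝ) : tsNorm θ σ m x ≤ tsNormLim θ σ x :=
  le_ciSup (bddAbove_range_tsNorm x) m

lemma tsNormLim_nonneg (x : List ℕ →₀ ℝ) : 0 ≤ tsNormLim θ σ x :=
  (tsNorm_nonneg 0 x).trans (tsNorm_le_tsNormLim 0 x)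

lemma tsNormLim_filter_le (P : List ℕ → Prop) [DecidablePred P] (x : List ℕ →₀ ℝ) :
    tsNormLim θ σ (x.filter P) ≤ tsNormLim θ σ x :=
  ciSup_le fun m => (tsNorm_filter_le P m x).trans (tsNorm_le_tsNormLim m x)

lemma tsNormLim_smul (c : ℝ) (x : List ℕ →₀ ℝ) :
    tsNormLim θ σ (c • x) = |c| * tsNormLim θ σ x := by
  simp only [tsNormLim, tsNorm_smul, Real.mul_iSup_of_nonneg (abs_nonneg c)]

lemma sum_tsNormLim_le_of_forall {ι : Type*} {s : Finset ι} {x : ι → List ℕ →₀ ℝ} {C : ℝ}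
    (h : ∀ m, ∑ i ∈ s, tsNorm θ σ m (x i) ≤ C) : ∑ i ∈ s, tsNormLim θ σ (x i) ≤ C :=
  le_of_tendsto' (tendsto_finsetSum s fun i _ => tendsto_tsNorm_tsNormLim (x i)) h

end TsNorm

section Blocks

variable {θ : Set (List ℕ)} {σ : ℕ ≃ List ℕ} {p : ℕ → ℕ} {y : ℕ → List ℕ →₀ ℝ} {a : ℕ → ℝ}

lemma symm_mem_Ioc_of_sum_single_apply_ne_zero {lo hi : ℕ} {b : ℕ → ℝ} {s : List ℕ}
    (h : (∑ i ∈ Finset.Ioc lo hi, b i • Finsupp.single (σ i) (1 : ℝ)) s ≠ 0) :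
    σ.symm s ∈ Finset.Ioc lo hi := by
  rw [Finsupp.finsetSum_apply] at h
  obtain ⟨i, hi, hne⟩ := Finset.exists_ne_zero_of_sum_ne_zero h
  have hs : σ i = s := by
    by_contra hs
    exact hne (by rw [Finsupp.smul_apply, Finsupp.single_eq_of_ne (Ne.symm hs), smul_zero])
  rwa [← hs, Equiv.symm_apply_apply]

noncomputable def leadVec (σ : ℕ ≃ List ℕ) (p : ℕ → ℕ) (a : ℕ → ℝ) (S : Finset ℕ) :
    List ℕ →₀ ℝ :=
  ∑ k ∈ S, a k • Finsupp.single (σ (p k + 1)) (1 : ℝ)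

noncomputable def blockVec (y : ℕ → List ℕ →₀ ℝ) (a : ℕ → ℝ) (S : Finset ℕ) : List ℕ →₀ ℝ :=
  ∑ k ∈ S, a k • y k

def headsIn (σ : ℕ ≃ List ℕ) (p : ℕ → ℕ) (S : Finset ℕ) (E : Finset (List ℕ)) : Finset ℕ :=
  S.filter fun k => σ (p k + 1) ∈ E

def blockSupport (y : ℕ → List ℕ →₀ ℝ) (S : Finset ℕ) : Finset (List ℕ) :=
  S.biUnion fun k => (y k).support

lemma headsIn_subset (S : Finset ℕ) (E : Finset (List ℕ)) : headsIn σ p S E ⊆ S :=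
  Finset.filter_subset _ _

lemma leadVec_filter (S : Finset ℕ) (E : Finset (List ℕ)) :
    (leadVec σ p a S).filter (· ∈ E) = leadVec σ p a (headsIn σ p S E) := by
  rw [leadVec, leadVec, headsIn, Finsupp.filter_sum, Finset.sum_filter]
  refine Finset.sum_congr rfl fun k _ => ?_
  rw [Finsupp.filter_smul]
  split_ifs with h
  · rw [Finsupp.filter_single_of_pos _ h]
  · rw [Finsupp.filter_single_of_neg _ h, smul_zero]

lemma leadVec_apply_lead (hp : StrictMono p) (S : Finset ℕ) (k : ℕ) :
    leadVec σ p a S (σ (p k + 1)) = if k ∈ S then a k else 0 := by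
  simp [leadVec, Finsupp.single_apply, hp.injective.eq_iff]

lemma leadVec_apply_of_forall_ne {s : List ℕ} (hs : ∀ k, σ (p k + 1) ≠ s) (S : Finset ℕ) :
    leadVec σ p a S s = 0 := by
  simp [leadVec, hs]

lemma supVal_leadVec_le (hp : StrictMono p) {S : Finset ℕ} {C : ℝ} (hC : 0 ≤ C)
    (ha : ∀ k ∈ S, |a k| ≤ C) : supVal (leadVec σ p a S) ≤ C := by
  refine ciSup_le fun s => ?_
  by_cases hs : ∃ k, σ (p k + 1) = s
  · obtain ⟨k, rfl⟩ := hs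
    rw [leadVec_apply_lead hp]
    split_ifs with hk
    · exact ha k hk
    · simpa using hC
  · simp only [not_exists] at hs
    simpa [leadVec_apply_of_forall_ne hs] using hC

lemma blockVec_filter_blockSupport (hdisj : ∀ k l, k ≠ l → Disjoint (y k).support (y l).support)
    {S S' : Finset ℕ} (hS' : S' ⊆ S) :
    (blockVec y a S).filter (· ∈ blockSupport y S') = blockVec y a S' := by
  rw [blockVec, blockVec, Finsupp.filter_sum]
  rw [← Finset.sum_subset hS' fun k _ hk => (Finsupp.filter_eq_zero_iff _ _).mpr fun s hs => by
    obtain ⟨l, hl, hsl⟩ := Finset.mem_biUnion.mp hs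
    have hkl : k ≠ l := by rintro rfl; exact hk hl
    simp [Finsupp.notMem_support_iff.mp (Finset.disjoint_right.mp (hdisj k l hkl) hsl)]]
  refine Finset.sum_congr rfl fun k hk => (Finsupp.filter_eq_self_iff _ _).mpr fun s hs =>
    Finset.mem_biUnion.mpr ⟨k, hk, Finsupp.mem_support_iff.mpr fun h0 => hs (by simp [h0])⟩

lemma abs_le_tsNormLim_blockVec (hnormal : ∀ k, 1 ≤ tsNormLim θ σ (y k))
    (hdisj : ∀ k l, k ≠ l → Disjoint (y k).support (y l).support) {S : Finset ℕ} {k : ℕ}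
    (hk : k ∈ S) : |a k| ≤ tsNormLim θ σ (blockVec y a S) :=
  calc |a k| ≤ |a k| * tsNormLim θ σ (y k) := le_mul_of_one_le_right (abs_nonneg _) (hnormal k)
    _ = tsNormLim θ σ (blockVec y a {k}) := by rw [blockVec, Finset.sum_singleton, tsNormLim_smul]
    _ = tsNormLim θ σ ((blockVec y a S).filter (· ∈ blockSupport y {k})) := by
        rw [blockVec_filter_blockSupport hdisj (Finset.singleton_subset_iff.mpr hk)]
    _ ≤ tsNormLim θ σ (blockVec y a S) := tsNormLim_filter_le _ _

lemma TsAdmissible.tsSemiAdmissible_blockSupport_headsIn (hp : StrictMono p)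
    (hwin : ∀ k, ∀ s ∈ (y k).support, σ.symm s ∈ Finset.Ioc (p k) (p (k + 1)))
    (hθsupp : ∀ n, ↑(y n).support ⊆ θ)
    (hincomp : ∀ n m, n ≠ m → CompIncomp ↑(y n).support ↑(y m).support)
    {k : ℕ} {E : Fin k → Finset (List ℕ)} (hE : TsAdmissible θ σ k E) (S : Finset ℕ) :
    TsSemiAdmissible θ σ k fun i => blockSupport y (headsIn σ p S (E i)) := by
  have hmem : ∀ i, ∀ s ∈ blockSupport y (headsIn σ p S (E i)),
      ∃ l, σ (p l + 1) ∈ E i ∧ s ∈ (y l).support := fun i s hs => by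
    obtain ⟨l, hl, hsl⟩ := Finset.mem_biUnion.mp hs
    exact ⟨l, (Finset.mem_filter.mp hl).2, hsl⟩
  refine ⟨fun i s hs => ?_, fun i j hij s hs t ht => ?_, fun i s hs => ?_,
    fun i j hij s hs t ht => ?_⟩
  · obtain ⟨l, -, hsl⟩ := hmem i s hs
    exact hθsupp l hsl
  · obtain ⟨l, hl, hsl⟩ := hmem i s hs
    obtain ⟨l', hl', htl'⟩ := hmem j t ht
    have hlead := hE.2.1 i j hij _ hl _ hl'
    rw [Equiv.symm_apply_apply, Equiv.symm_apply_apply] at hlead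
    have hll' : l + 1 ≤ l' := hp.lt_iff_lt.mp (by omega)
    have := hp.monotone hll'
    have := Finset.mem_Ioc.mp (hwin l s hsl)
    have := Finset.mem_Ioc.mp (hwin l' t htl')
    omega
  · obtain ⟨l, hl, hsl⟩ := hmem i s hs
    have hlead := hE.2.2.1 i _ hl
    rw [Equiv.symm_apply_apply] at hlead
    have := Finset.mem_Ioc.mp (hwin l s hsl)
    omega
  · obtain ⟨l, hl, hsl⟩ := hmem i s hs
    obtain ⟨l', hl', htl'⟩ := hmem j t ht
    refine hincomp l l' ?_ s hsl t htl'
    rintro rfl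
    exact Finset.disjoint_left.mp (hE.pairwise_disjoint hij) hl hl'

lemma tsNorm_leadVec_le_tsNormLim_blockVec (hp : StrictMono p)
    (hwin : ∀ k, ∀ s ∈ (y k).support, σ.symm s ∈ Finset.Ioc (p k) (p (k + 1)))
    (hθsupp : ∀ n, ↑(y n).support ⊆ θ) (hnormal : ∀ k, 1 ≤ tsNormLim θ σ (y k))
    (hincomp : ∀ n m, n ≠ m → CompIncomp ↑(y n).support ↑(y m).support) (m : ℕ)
    (S : Finset ℕ) : tsNorm θ σ m (leadVec σ p a S) ≤ tsNormLim θ σ (blockVec y a S) := by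
  have hdisj : ∀ k l, k ≠ l → Disjoint (y k).support (y l).support := fun k l hkl =>
    Finset.disjoint_coe.mp (hincomp k l hkl).disjoint
  have hsup : ∀ S, supVal (leadVec σ p a S) ≤ tsNormLim θ σ (blockVec y a S) := fun S =>
    supVal_leadVec_le hp (tsNormLim_nonneg _) fun k hk => abs_le_tsNormLim_blockVec hnormal hdisj hk
  induction m generalizing S with
  | zero => exact hsup S
  | succ m ih =>
    refine tsNorm_succ_le_of (hsup S) fun k E hE => ?_
    have hF := hE.tsSemiAdmissible_blockSupport_headsIn hp hwin hθsupp hincomp S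
    calc ∑ i, tsNorm θ σ m ((leadVec σ p a S).filter (· ∈ E i))
        = ∑ i, tsNorm θ σ m (leadVec σ p a (headsIn σ p S (E i))) := by
          simp only [leadVec_filter]
      _ ≤ ∑ i, tsNormLim θ σ (blockVec y a (headsIn σ p S (E i))) :=
          Finset.sum_le_sum fun i _ => ih _
      _ ≤ 2 * tsNormLim θ σ (blockVec y a S) := sum_tsNormLim_le_of_forall fun M => calc
          ∑ i, tsNorm θ σ M (blockVec y a (headsIn σ p S (E i)))
            = ∑ i, tsNorm θ σ M
                ((blockVec y a S).filter (· ∈ blockSupport y (headsIn σ p S (E i)))) :=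
              Finset.sum_congr rfl fun i _ => by
                rw [blockVec_filter_blockSupport hdisj (headsIn_subset S (E i))]
          _ ≤ 2 * tsNorm θ σ (M + 1) (blockVec y a S) := hF.sum_tsNorm_filter_le _
          _ ≤ 2 * tsNormLim θ σ (blockVec y a S) := by
              linarith [tsNorm_le_tsNormLim (θ := θ) (σ := σ) (M + 1) (blockVec y a S)]

end Blocks

theorem tsirelson_block_lower_estimate_general
    (θ : Set (List ℕ))
    (σ : ℕ ≃ List ℕ)
    (p : ℕ → ℕ) (hp : StrictMono p) (b : ℕ → ℝ)
    (y : ℕ → (List ℕ →₀ ℝ))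
    (hy : ∀ n, y n = ∑ i ∈ Finset.Ioc (p n) (p (n + 1)), b i • Finsupp.single (σ i) (1 : ℝ))
    (hθsupp : ∀ n, ↑(y n).support ⊆ θ)
    (hnormal : ∀ n, tsNormLim θ σ (y n) = 1)
    (hincomp : ∀ n m, n ≠ m → CompIncomp ↑(y n).support ↑(y m).support) :
    ∀ (a : ℕ → ℝ) (n : ℕ),
      tsNormLim θ σ (∑ k ∈ Finset.range n, a k • Finsupp.single (σ (p k + 1)) (1 : ℝ)) ≤
        tsNormLim θ σ (∑ k ∈ Finset.range n, a k • y k) := by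
  intro a n
  have hwin : ∀ k, ∀ s ∈ (y k).support, σ.symm s ∈ Finset.Ioc (p k) (p (k + 1)) :=
    fun k s hs => symm_mem_Ioc_of_sum_single_apply_ne_zero
      (by rw [← hy k]; exact Finsupp.mem_support_iff.mp hs)
  exact ciSup_le fun m => tsNorm_leadVec_le_tsNormLim_blockVec hp hwin hθsupp
    (fun k => (hnormal k).ge) hincomp m (Finset.range n)

/-- for a normalized block sequence `yₙ = Σ_{i=pₙ+1}^{p_{n+1}} bᵢ e_{σ(i)}` in
the parameterized Tsirelson space over `θ` with pairwise completely incomparable supports,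
`‖Σ aₙ e_{σ(pₙ+1)}‖_θ ≤ ‖Σ aₙ yₙ‖_θ` for all scalars. -/
theorem tsirelson_block_lower_estimate
    (θ : Set (List ℕ)) (hθ : IsTree θ)
    (σ : ℕ ≃ List ℕ) (hσ : CompatibleEnum σ)
    (p : ℕ → ℕ) (hp : StrictMono p) (b : ℕ → ℝ)
    (y : ℕ → (List ℕ →₀ ℝ))
    (hy : ∀ n, y n = ∑ i ∈ Finset.Ioc (p n) (p (n + 1)), b i • Finsupp.single (σ i) (1 : ℝ))
    (hθsupp : ∀ n, ↑(y n).support ⊆ θ)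
    (hstart : ∀ n, σ (p n + 1) ∈ θ)
    (hnormal : ∀ n, tsNormLim θ σ (y n) = 1)
    (hincomp : ∀ n m, n ≠ m → CompIncomp ↑(y n).support ↑(y m).support) :
    ∀ (a : ℕ → ℝ) (n : ℕ),
      tsNormLim θ σ (∑ k ∈ Finset.range n, a k • Finsupp.single (σ (p k + 1)) (1 : ℝ)) ≤
        tsNormLim θ σ (∑ k ∈ Finset.range n, a k • y k) :=
  tsirelson_block_lower_estimate_general θ σ p hp b y hy hθsupp hnormal hincomp
end

section
/- Let X be a Banach space with a Schauder basis (eₙ) that is tight with constants. Then (eₙ) is continuously tight; that is, there exists a continuous map f : bb(eₙ) → [ℕ] assigning to each normalized block sequence ȳ a sequence of successive intervals Iⱼ = [f(ȳ)₂ⱼ, f(ȳ)₂ⱼ₊₁] such that for every infinite A ⊆ ℕ, the closed span of ȳ does not embed into the closed span of {eₙ : n ∉ ∪_{j∈A} Iⱼ}. -/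
/-- A normalized block sequence of the basis `e`. -/
def IsBlockSeq {X : Type*} [NormedAddCommGroup X] [NormedSpace ℝ X] (e y : ℕ → X) : Prop :=
  ∃ p : ℕ → ℕ, StrictMono p ∧ ∀ n, ‖y n‖ = 1 ∧
    y n ∈ Submodule.span ℝ (e '' Set.Ico (p n) (p (n + 1)))

/-- `Z` `K`-embeds into `W` : there is an embedding `T` with `‖z‖ ≤ ‖Tz‖ ≤ K ‖z‖`. -/
def Embeds (K : ℝ) (Z W : Type*) [NormedAddCommGroup Z] [NormedSpace ℝ Z]
    [NormedAddCommGroup W] [NormedSpace ℝ W] : Prop :=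
  ∃ T : Z →L[ℝ] W, ∀ z : Z, ‖z‖ ≤ ‖T z‖ ∧ ‖T z‖ ≤ K * ‖z‖

/-!
Fix a normalized block sequence `y`. Tightness with constants, compactness of unit spheres in
finite-dimensional spaces and a small-perturbation argument show that for all `K` and `a` there is
`l` such that no subspace of `[y₀, …, y_l]` of codimension at most `a` `K`-embeds into a tail
`[eₙ : n ≥ l]`. If `[y₀, …, y_l]` `K`-embedded into `[eₙ : n ∉ [a, b]]` with `b ≥ l`, the kernel of
the head projection `P_a` composed with the embedding would be such a subspace, since `1 - P_a` maps
it into the tail. So for every `j` and every start `a` there is a least code of a pair `(l, b)`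
for which `[y₀, …, y_l]` does not `(j + 1)`-embed into `[eₙ : n ∉ [a, b]]`; choosing these greedily
gives the intervals `I_j`. Minimality makes the first intervals depend only on finitely many `yᵢ`,
and an embedding with constant `K` avoiding `⋃_{j ∈ A} I_j` avoids some `I_j` with `j + 1 ≥ K`.
-/

open Set Submodule Topology Module

theorem Nat.sInf_eq_sInf_of_forall_le_iff {S T : Set ℕ} (hS : S.Nonempty)
    (h : ∀ n ≤ sInf S, n ∈ S ↔ n ∈ T) : sInf T = sInf S := by
  have hT : sInf S ∈ T := (h _ le_rfl).1 (Nat.sInf_mem hS)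
  refine (Nat.sInf_le hT).antisymm (not_lt.1 fun hlt => ?_)
  exact Nat.notMem_of_lt_sInf hlt ((h _ hlt.le).2 (Nat.sInf_mem ⟨_, hT⟩))

theorem Finsupp.linearCombination_filter_mem_span {α M : Type*} [AddCommGroup M] [Module ℝ M]
    (v : α → M) {S : Set α} {l : α →₀ ℝ} (hl : l ∈ Finsupp.supported ℝ ℝ S) (p : α → Prop)
    [DecidablePred p] :
    Finsupp.linearCombination ℝ v (l.filter p) ∈ span ℝ (v '' (S ∩ {a | p a})) := by
  refine (Finsupp.mem_span_image_iff_linearCombination ℝ).2 ⟨_, ?_, rfl⟩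
  intro a ha
  rw [Finsupp.support_filter, Finset.mem_coe, Finset.mem_filter] at ha
  exact ⟨hl ha.1, ha.2⟩

theorem LinearIndependent.finrank_span_image_finset {X ι : Type*} [AddCommGroup X]
    [Module ℝ X] {y : ι → X} (hy : LinearIndependent ℝ y) (s : Finset ι) : finrank ℝ (span ℝ (y '' s)) = s.card := by
  rw [image_eq_range]
  exact (finrank_span_eq_card (hy.comp _ Subtype.val_injective)).trans (by simp)

theorem finrank_span_image_finset_le {X ι : Type*} [AddCommGroup X] [Module ℝ X] [DecidableEq X]
    (v : ι → X) (s : Finset ι) : finrank ℝ (span ℝ (v '' s)) ≤ s.card := by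
  rw [← Finset.coe_image]
  exact (finrank_span_finset_le_card _).trans Finset.card_image_le

theorem exists_subseq_tendsto_pi {X : Type*} [TopologicalSpace X] [FirstCountableTopology X]
    {s : ℕ → Set X} (hs : ∀ i, IsCompact (s i)) {u : ℕ → ℕ → X} (hu : ∀ t i, u t i ∈ s i) :
    ∃ z : ℕ → X, ∃ ψ : ℕ → ℕ, StrictMono ψ ∧ (∀ i, z i ∈ s i) ∧
      ∀ i, Filter.Tendsto (fun t => u (ψ t) i) Filter.atTop (𝓝 (z i)) := by
  obtain ⟨z, hz, ψ, hψ, hlim⟩ := (isCompact_pi_infinite hs).tendsto_subseq (x := u) fun t => hu t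
  exact ⟨z, ψ, hψ, hz, tendsto_pi_nhds.1 hlim⟩

section NormedSpace

variable {X : Type*} [NormedAddCommGroup X] [NormedSpace ℝ X]

theorem dense_span_range_of_denseRange {ι : Type*} {e : ι → X}
    (h : DenseRange fun a : ι →₀ ℝ => ∑ n ∈ a.support, a n • e n) :
    Dense (span ℝ (range e) : Set X) := by
  have hrange : range (fun a : ι →₀ ℝ => ∑ n ∈ a.support, a n • e n) = span ℝ (range e) := by
    ext x
    simp [Finsupp.mem_span_range_iff_exists_finsupp, Finsupp.sum]
  rw [← hrange]
  exact h

theorem Submodule.isCompact_inter_sphere (W : Submodule ℝ X) [FiniteDimensional ℝ W] :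
    IsCompact ((W : Set X) ∩ Metric.sphere 0 1) := by
  convert (isCompact_sphere (0 : W) 1).image continuous_subtype_val using 1
  ext x
  simp only [mem_inter_iff, SetLike.mem_coe, mem_sphere_zero_iff_norm, mem_image]
  exact ⟨fun ⟨hxW, hx⟩ => ⟨⟨x, hxW⟩, hx, rfl⟩, by rintro ⟨w, hw, rfl⟩; exact ⟨w.2, hw⟩⟩

theorem Submodule.exists_norm_eq_one_mem_inf {V W D : Submodule ℝ X} [FiniteDimensional ℝ D]
    (hV : V ≤ D) (hW : W ≤ D) (h : finrank ℝ D < finrank ℝ V + finrank ℝ W) :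
    ∃ v ∈ V ⊓ W, ‖v‖ = 1 := by
  have := Submodule.finiteDimensional_of_le hV
  have := Submodule.finiteDimensional_of_le hW
  have hsup := Submodule.finrank_mono (sup_le hV hW)
  have hdim := Submodule.finrank_sup_add_finrank_inf_eq V W
  obtain ⟨v, hv, hv0⟩ := Submodule.exists_mem_ne_zero_of_ne_bot
    (Submodule.finrank_eq_zero.not.1 (by omega : finrank ℝ ↥(V ⊓ W) ≠ 0))
  exact ⟨‖v‖⁻¹ • v, Submodule.smul_mem _ _ hv, norm_smul_inv_norm hv0⟩

end NormedSpace

namespace Embeds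

variable {X Z W : Type*} [NormedAddCommGroup X] [NormedSpace ℝ X] [NormedAddCommGroup Z]
  [NormedSpace ℝ Z] [NormedAddCommGroup W] [NormedSpace ℝ W] {K K' : ℝ}

theorem trans {V : Type*} [NormedAddCommGroup V] [NormedSpace ℝ V] (h₁ : Embeds K Z V)
    (h₂ : Embeds K' V W) (hK' : 0 ≤ K') : Embeds (K' * K) Z W := by
  obtain ⟨S, hS⟩ := h₁
  obtain ⟨T, hT⟩ := h₂
  refine ⟨T.comp S, fun z => ⟨(hS z).1.trans (hT _).1, ?_⟩⟩
  calc ‖T (S z)‖ ≤ K' * ‖S z‖ := (hT _).2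
    _ ≤ K' * (K * ‖z‖) := mul_le_mul_of_nonneg_left (hS z).2 hK'
    _ = K' * K * ‖z‖ := (mul_assoc _ _ _).symm

theorem mono (h : Embeds K Z W) (hKK' : K ≤ K') : Embeds K' Z W := by
  obtain ⟨T, hT⟩ := h
  exact ⟨T, fun z => ⟨(hT z).1, (hT z).2.trans (mul_le_mul_of_nonneg_right hKK' (norm_nonneg z))⟩⟩

theorem mono_left {p q : Submodule ℝ X} (h : Embeds K q W) (hpq : p ≤ q) : Embeds K p W := by
  obtain ⟨T, hT⟩ := h
  exact ⟨T.comp (p.subtypeL.codRestrict q fun x => hpq x.2), fun z => hT ⟨z, hpq z.2⟩⟩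

theorem mono_right {p q : Submodule ℝ X} (h : Embeds K Z p) (hpq : p ≤ q) : Embeds K Z q := by
  obtain ⟨T, hT⟩ := h
  exact ⟨(p.subtypeL.comp T).codRestrict q fun z => hpq (T z).2, fun z => hT z⟩

theorem of_forall_mem {p q : Submodule ℝ X} (T : Z →L[ℝ] p)
    (hT : ∀ z, ‖z‖ ≤ ‖T z‖ ∧ ‖T z‖ ≤ K * ‖z‖) (hq : ∀ z, (T z : X) ∈ q) : Embeds K Z q :=
  ⟨(p.subtypeL.comp T).codRestrict q hq, hT⟩

end Embeds

theorem embeds_two_span_of_near {X : Type*} [NormedAddCommGroup X] [NormedSpace ℝ X]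
    {ι : Type*} [Fintype ι] {v v' : ι → X} (hv : LinearIndependent ℝ v) {M ε : ℝ}
    (hcoeff : ∀ (c : ι → ℝ) (i : ι), |c i| ≤ M * ‖∑ j, c j • v j‖)
    (hnear : ∀ i, ‖v' i - v i‖ ≤ ε) (hsmall : Fintype.card ι * M * ε ≤ 1 / 3) :
    Embeds 2 (span ℝ (range v)) (span ℝ (range v')) := by
  let B := Basis.span hv
  let S : span ℝ (range v) →ₗ[ℝ] span ℝ (range v') :=
    B.constr ℝ fun i => ⟨v' i, subset_span (mem_range_self i)⟩
  have hw : ∀ w : span ℝ (range v), (w : X) = ∑ i, B.repr w i • v i := fun w => by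
    conv_lhs => rw [← B.sum_repr w]
    simp [B]
  have hSw : ∀ w, (S w : X) = ∑ i, B.repr w i • v' i := fun w => by
    simp [S, Basis.constr_apply_fintype]
  have hdiff : ∀ w, ‖(S w : X) - w‖ ≤ ‖(w : X)‖ / 3 := fun w =>
    calc ‖(S w : X) - w‖ = ‖∑ i, B.repr w i • (v' i - v i)‖ := by
          simp only [hSw, smul_sub, Finset.sum_sub_distrib, ← hw]
      _ ≤ ∑ i, |B.repr w i| * ε := by
          refine (norm_sum_le _ _).trans (Finset.sum_le_sum fun i _ => ?_)
          rw [norm_smul, Real.norm_eq_abs]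
          exact mul_le_mul_of_nonneg_left (hnear i) (abs_nonneg _)
      _ ≤ ∑ _i : ι, M * ‖(w : X)‖ * ε := by
          refine Finset.sum_le_sum fun i _ => mul_le_mul_of_nonneg_right ?_
            ((norm_nonneg _).trans (hnear i))
          simpa only [← hw] using hcoeff (B.repr w) i
      _ = (Fintype.card ι * M * ε) * ‖(w : X)‖ := by
          rw [Finset.sum_const, Finset.card_univ, nsmul_eq_mul]; ring
      _ ≤ ‖(w : X)‖ / 3 := by nlinarith [norm_nonneg (w : X)]
  have : FiniteDimensional ℝ (span ℝ (range v)) := .span_of_finite ℝ (finite_range v)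
  refine ⟨LinearMap.toContinuousLinearMap ((3 / 2 : ℝ) • S), fun w => ?_⟩
  have hnorm : ‖LinearMap.toContinuousLinearMap ((3 / 2 : ℝ) • S) w‖ = 3 / 2 * ‖(S w : X)‖ := by
    change ‖(3 / 2 : ℝ) • S w‖ = _
    rw [norm_smul, Real.norm_of_nonneg (by norm_num)]
    rfl
  have h₁ := norm_sub_norm_le (S w : X) w
  have h₂ := norm_sub_norm_le (w : X) (S w)
  rw [norm_sub_rev] at h₂
  have := hdiff w
  rw [hnorm]
  change ‖(w : X)‖ ≤ _ ∧ _ ≤ 2 * ‖(w : X)‖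
  constructor <;> linarith

namespace IsBasicSeq

variable {X : Type*} [NormedAddCommGroup X] [NormedSpace ℝ X] {e : ℕ → X}

noncomputable def basisConst (he : IsBasicSeq e) : ℝ := he.2.choose

theorem basisConst_pos (he : IsBasicSeq e) : 0 < he.basisConst := he.2.choose_spec.1

theorem norm_partialSum_le (he : IsBasicSeq e) (a : ℕ → ℝ) {n m : ℕ} (h : n ≤ m) :
    ‖∑ i ∈ Finset.range n, a i • e i‖ ≤ he.basisConst * ‖∑ i ∈ Finset.range m, a i • e i‖ :=
  he.2.choose_spec.2 a n m h

theorem linearIndependent (he : IsBasicSeq e) : LinearIndependent ℝ e := by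
  classical
  refine linearIndependent_iff'.2 fun s g hg i hi => ?_
  obtain ⟨m, hsm⟩ := s.exists_nat_subset_range
  let a : ℕ → ℝ := fun j => if j ∈ s then g j else 0
  have hm : ∑ j ∈ Finset.range m, a j • e j = 0 := by
    rw [← hg, ← Finset.sum_subset hsm fun j _ hj => by simp [a, hj]]
    exact Finset.sum_congr rfl fun j hj => by simp [a, hj]
  -- every partial sum of a vanishing sum vanishes, so each term does
  have hzero : ∀ n ≤ m, ∑ j ∈ Finset.range n, a j • e j = 0 := fun n hn =>
    norm_le_zero_iff.1 (by simpa [hm] using he.norm_partialSum_le a hn)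
  have him : i < m := Finset.mem_range.1 (hsm hi)
  have hterm := Finset.sum_range_succ (fun j => a j • e j) i
  rw [hzero i him.le, hzero (i + 1) him, zero_add, eq_comm] at hterm
  simpa [a, hi, he.1 i] using hterm

noncomputable def spanProj (he : IsBasicSeq e) (n : ℕ) : span ℝ (range e) →ₗ[ℝ] X where
  toFun x := Finsupp.linearCombination ℝ e ((he.linearIndependent.repr x).filter (· < n))
  map_add' x y := by rw [map_add, Finsupp.filter_add, map_add]
  map_smul' c x := by rw [map_smul, Finsupp.filter_smul, map_smul]; rfl

theorem spanProj_apply (he : IsBasicSeq e) (n : ℕ) (x : span ℝ (range e)) :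
    he.spanProj n x = ∑ i ∈ Finset.range n, he.linearIndependent.repr x i • e i := by
  classical
  change Finsupp.linearCombination ℝ e _ = _
  rw [Finsupp.linearCombination_apply, Finsupp.sum_of_support_subset _ _ _ (by simp)]
  · refine Finset.sum_congr rfl fun i hi => ?_
    rw [Finsupp.filter_apply, if_pos (Finset.mem_range.1 hi)]
  · intro i hi
    exact Finset.mem_range.2 (Finset.mem_filter.1 hi).2

theorem repr_mem_supported (he : IsBasicSeq e) {S : Set ℕ} (x : span ℝ (range e))
    (hx : (x : X) ∈ span ℝ (e '' S)) : he.linearIndependent.repr x ∈ Finsupp.supported ℝ ℝ S := by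
  obtain ⟨l, hl, hlx⟩ := (Finsupp.mem_span_image_iff_linearCombination ℝ).1 hx
  rwa [he.linearIndependent.repr_eq hlx]

theorem spanProj_mem_span_inter (he : IsBasicSeq e) {S : Set ℕ} (n : ℕ) (x : span ℝ (range e))
    (hx : (x : X) ∈ span ℝ (e '' S)) : he.spanProj n x ∈ span ℝ (e '' (S ∩ Iio n)) :=
  Finsupp.linearCombination_filter_mem_span e (he.repr_mem_supported x hx) _

theorem sub_spanProj_mem_span_inter (he : IsBasicSeq e) {S : Set ℕ} (n : ℕ)
    (x : span ℝ (range e)) (hx : (x : X) ∈ span ℝ (e '' S)) :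
    (x : X) - he.spanProj n x ∈ span ℝ (e '' (S ∩ Ici n)) := by
  have hsplit : (x : X) - he.spanProj n x =
      Finsupp.linearCombination ℝ e ((he.linearIndependent.repr x).filter (¬ · < n)) := by
    conv_lhs => rw [← he.linearIndependent.linearCombination_repr x,
      ← Finsupp.filter_add_filter_not (he.linearIndependent.repr x) (· < n)]
    rw [map_add]
    exact add_sub_cancel_left _ _
  rw [hsplit]
  convert Finsupp.linearCombination_filter_mem_span e (he.repr_mem_supported x hx) _ using 4
  ext
  simp

theorem spanProj_eq_self (he : IsBasicSeq e) {S : Set ℕ} {n : ℕ} (hS : S ⊆ Iio n)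
    (x : span ℝ (range e)) (hx : (x : X) ∈ span ℝ (e '' S)) : he.spanProj n x = x := by
  have h := he.sub_spanProj_mem_span_inter n x hx
  rw [show S ∩ Ici n = ∅ from eq_empty_of_forall_notMem fun i hi =>
      (mem_Iio.1 (hS hi.1)).not_ge (mem_Ici.1 hi.2),
    image_empty, span_empty, mem_bot, sub_eq_zero] at h
  exact h.symm

theorem spanProj_eq_zero (he : IsBasicSeq e) {S : Set ℕ} {n : ℕ} (hS : S ⊆ Ici n)
    (x : span ℝ (range e)) (hx : (x : X) ∈ span ℝ (e '' S)) : he.spanProj n x = 0 := by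
  have h := he.spanProj_mem_span_inter n x hx
  rwa [show S ∩ Iio n = ∅ from eq_empty_of_forall_notMem fun i hi =>
      (mem_Iio.1 hi.2).not_ge (mem_Ici.1 (hS hi.1)), image_empty, span_empty, mem_bot] at h

theorem norm_spanProj_le (he : IsBasicSeq e) (n : ℕ) (x : span ℝ (range e)) :
    ‖he.spanProj n x‖ ≤ he.basisConst * ‖(x : X)‖ := by
  obtain ⟨m, hm⟩ := (he.linearIndependent.repr x).support.exists_nat_subset_range
  have hx : (x : X) = he.spanProj (max n m) x := by
    refine (he.spanProj_eq_self (S := (he.linearIndependent.repr x).support) ?_ x ?_).symm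
    · exact fun i hi => lt_max_of_lt_right (Finset.mem_range.1 (hm hi))
    · exact (Finsupp.mem_span_image_iff_linearCombination ℝ).2
        ⟨_, (Finsupp.mem_supported ℝ _).2 subset_rfl, he.linearIndependent.linearCombination_repr x⟩
  rw [hx, spanProj_apply, spanProj_apply]
  exact he.norm_partialSum_le _ (le_max_left n m)

variable [CompleteSpace X]

/-- Without density of the span, `ContinuousLinearMap.extend` returns the junk value `0`; hence
the hypotheses `hd` below. -/
noncomputable def proj (he : IsBasicSeq e) (n : ℕ) : X →L[ℝ] X :=
  (LinearMap.mkContinuous (he.spanProj n) he.basisConst (he.norm_spanProj_le n)).extend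
    (span ℝ (range e)).subtypeL

theorem proj_coe (he : IsBasicSeq e) (hd : Dense (span ℝ (range e) : Set X)) (n : ℕ)
    (x : span ℝ (range e)) : he.proj n x = he.spanProj n x :=
  ContinuousLinearMap.extend_eq _ hd.denseRange_val isometry_subtype_coe.isUniformInducing x

theorem norm_proj_le (he : IsBasicSeq e) (hd : Dense (span ℝ (range e) : Set X)) (n : ℕ)
    (x : X) : ‖he.proj n x‖ ≤ he.basisConst * ‖x‖ :=
  hd.induction (fun x hx => by simpa [he.proj_coe hd n ⟨x, hx⟩] using he.norm_spanProj_le n ⟨x, hx⟩)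
    (isClosed_le (by fun_prop) (by fun_prop)) x

theorem proj_eq_self (he : IsBasicSeq e) (hd : Dense (span ℝ (range e) : Set X)) {S : Set ℕ}
    {n : ℕ} (hS : S ⊆ Iio n) {x : X} (hx : x ∈ span ℝ (e '' S)) : he.proj n x = x := by
  have hx' : x ∈ span ℝ (range e) := span_mono (image_subset_range e S) hx
  exact (he.proj_coe hd n ⟨x, hx'⟩).trans (he.spanProj_eq_self hS _ hx)

theorem proj_eq_zero (he : IsBasicSeq e) (hd : Dense (span ℝ (range e) : Set X)) {S : Set ℕ}
    {n : ℕ} (hS : S ⊆ Ici n) {x : X} (hx : x ∈ span ℝ (e '' S)) : he.proj n x = 0 := by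
  have hx' : x ∈ span ℝ (range e) := span_mono (image_subset_range e S) hx
  exact (he.proj_coe hd n ⟨x, hx'⟩).trans (he.spanProj_eq_zero hS _ hx)

theorem proj_mem_span_Iio (he : IsBasicSeq e) (hd : Dense (span ℝ (range e) : Set X)) (n : ℕ)
    (x : X) : he.proj n x ∈ span ℝ (e '' Iio n) := by
  have : FiniteDimensional ℝ (span ℝ (e '' Iio n)) :=
    FiniteDimensional.span_of_finite ℝ ((finite_Iio n).image e)
  refine hd.induction (fun x hx => ?_)
    ((closed_of_finiteDimensional _).preimage (he.proj n).continuous) x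
  rw [he.proj_coe hd n ⟨x, hx⟩]
  simpa using he.spanProj_mem_span_inter (S := univ) n ⟨x, hx⟩ (by simpa using hx)

theorem sub_proj_mem_closure_inter (he : IsBasicSeq e) (hd : Dense (span ℝ (range e) : Set X))
    {S : Set ℕ} (n : ℕ) {x : X} (hx : x ∈ (span ℝ (e '' S)).topologicalClosure) :
    x - he.proj n x ∈ (span ℝ (e '' (S ∩ Ici n))).topologicalClosure := by
  rw [← SetLike.mem_coe, topologicalClosure_coe] at hx ⊢
  refine map_mem_closure (f := fun x => x - he.proj n x) (by fun_prop) hx fun x hxS => ?_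
  have hx' : x ∈ span ℝ (range e) := span_mono (image_subset_range e S) hxS
  change x - he.proj n x ∈ _
  rw [SetLike.mem_coe, he.proj_coe hd n ⟨x, hx'⟩]
  exact he.sub_spanProj_mem_span_inter n ⟨x, hx'⟩ hxS

theorem proj_sub_proj_of_mem_block (he : IsBasicSeq e)
    (hd : Dense (span ℝ (range e) : Set X)) {p : ℕ → ℕ} (hp : Monotone p) {y : ℕ → X}
    (hy : ∀ j, y j ∈ span ℝ (e '' Ico (p j) (p (j + 1)))) (i j : ℕ) :
    he.proj (p (i + 1)) (y j) - he.proj (p i) (y j) = if j = i then y j else 0 := by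
  have hself : ∀ {n}, p (j + 1) ≤ n → he.proj n (y j) = y j := fun h =>
    he.proj_eq_self hd (fun _ hs => (mem_Ico.1 hs).2.trans_le h) (hy j)
  have hzero : ∀ {n}, n ≤ p j → he.proj n (y j) = 0 := fun h =>
    he.proj_eq_zero hd (fun _ hs => h.trans (mem_Ico.1 hs).1) (hy j)
  rcases lt_trichotomy j i with h | rfl | h
  · rw [hself (hp (by omega : j + 1 ≤ i + 1)), hself (hp h), sub_self, if_neg h.ne]
  · rw [hself le_rfl, hzero le_rfl, sub_zero, if_pos rfl]
  · rw [hzero (hp h), hzero (hp h.le), sub_self, if_neg h.ne']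

end IsBasicSeq

namespace IsBlockSeq

variable {X : Type*} [NormedAddCommGroup X] [NormedSpace ℝ X] {e : ℕ → X}

theorem norm_eq_one {y : ℕ → X} (hy : IsBlockSeq e y) (n : ℕ) : ‖y n‖ = 1 :=
  (hy.choose_spec.2 n).1

theorem of_mem_span_image_Ico {y z : ℕ → X} (hy : IsBlockSeq e y) {φ : ℕ → ℕ} (hφ : StrictMono φ)
    (hz : ∀ i, z i ∈ span ℝ (y '' Ico (φ i) (φ (i + 1)))) (hnorm : ∀ i, ‖z i‖ = 1) :
    IsBlockSeq e z := by
  obtain ⟨p, hp, hpy⟩ := hy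
  refine ⟨p ∘ φ, hp.comp hφ, fun i => ⟨hnorm i, span_le.2 ?_ (hz i)⟩⟩
  rintro _ ⟨j, hj, rfl⟩
  exact span_mono (image_mono (Ico_subset_Ico (hp.monotone hj.1) (hp.monotone hj.2)))
    (hpy j).2

variable [CompleteSpace X]

theorem abs_coeff_le (he : IsBasicSeq e) (hd : Dense (span ℝ (range e) : Set X)) {y : ℕ → X}
    (hy : IsBlockSeq e y) {ι : Type*} [Fintype ι] {k : ι → ℕ} (hk : Function.Injective k)
    (c : ι → ℝ) (i : ι) : |c i| ≤ 2 * he.basisConst * ‖∑ j, c j • y (k j)‖ := by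
  classical
  obtain ⟨p, hp, hpy⟩ := hy
  set w := ∑ j, c j • y (k j)
  -- the difference of two consecutive projections picks out a single block
  have hpick : he.proj (p (k i + 1)) w - he.proj (p (k i)) w = c i • y (k i) := by
    simp only [w, map_sum, map_smul, ← Finset.sum_sub_distrib, ← smul_sub,
      he.proj_sub_proj_of_mem_block hd hp.monotone (fun j => (hpy j).2), hk.eq_iff, smul_ite,
      smul_zero, Finset.sum_ite_eq', Finset.mem_univ, if_true]
  calc |c i| = ‖c i • y (k i)‖ := by rw [norm_smul, (hpy _).1, mul_one, Real.norm_eq_abs]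
    _ ≤ ‖he.proj (p (k i + 1)) w‖ + ‖he.proj (p (k i)) w‖ := hpick ▸ norm_sub_le _ _
    _ ≤ he.basisConst * ‖w‖ + he.basisConst * ‖w‖ :=
        add_le_add (he.norm_proj_le hd _ w) (he.norm_proj_le hd _ w)
    _ = 2 * he.basisConst * ‖w‖ := by ring

theorem linearIndependent (he : IsBasicSeq e) (hd : Dense (span ℝ (range e) : Set X))
    {y : ℕ → X} (hy : IsBlockSeq e y) : LinearIndependent ℝ y := by
  refine linearIndependent_iff'.2 fun s g hg i hi => abs_nonpos_iff.1 ?_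
  have h := hy.abs_coeff_le he hd Subtype.val_injective (fun j : s => g j) ⟨i, hi⟩
  rwa [Finset.sum_coe_sort s fun j => g j • y j, hg, norm_zero, mul_zero] at h

theorem exists_embeds_two_of_near (he : IsBasicSeq e) (hd : Dense (span ℝ (range e) : Set X))
    {z : ℕ → X} (hz : IsBlockSeq e z) (L : ℕ) :
    ∃ ε > 0, ∀ z' : ℕ → X, (∀ i ≤ L, ‖z' i - z i‖ ≤ ε) →
      Embeds 2 (span ℝ (z '' Icc 0 L)) (span ℝ (z' '' Icc 0 L)) := by
  have hC := he.basisConst_pos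
  refine ⟨1 / (6 * (L + 1) * he.basisConst), by positivity, fun z' hz' => ?_⟩
  rw [image_eq_range, image_eq_range]
  refine embeds_two_span_of_near ((hz.linearIndependent he hd).comp _ Subtype.val_injective)
    (hz.abs_coeff_le he hd Subtype.val_injective) (fun i => hz' i (mem_Icc.1 i.2).2) (le_of_eq ?_)
  simp
  field_simp
  norm_num

end IsBlockSeq

section Tight

variable {X : Type*} [NormedAddCommGroup X] [NormedSpace ℝ X]

noncomputable def tailSpan (e : ℕ → X) (l : ℕ) : Submodule ℝ X :=
  (span ℝ (e '' {n | l ≤ n})).topologicalClosure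

noncomputable def gapSpan (e : ℕ → X) (a b : ℕ) : Submodule ℝ X :=
  (span ℝ (e '' {n | n < a ∨ b < n})).topologicalClosure

def TightWithConstants (e : ℕ → X) : Prop :=
  ∀ y : ℕ → X, IsBlockSeq e y → ∀ K : ℝ, 0 < K → ∀ m : ℕ, ∃ l : ℕ, m < l ∧
    ¬ Embeds K (span ℝ (y '' Icc m l)) (tailSpan e l)

theorem tailSpan_anti (e : ℕ → X) {l l' : ℕ} (h : l ≤ l') : tailSpan e l' ≤ tailSpan e l :=
  topologicalClosure_mono (span_mono (image_mono fun _ hn => h.trans hn))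

variable [CompleteSpace X] {e : ℕ → X}

/-- Chunks of `a + 1` consecutive `yᵢ` meet every `V t` nontrivially; a diagonal compactness
argument makes unit vectors chosen in these intersections converge to a block sequence. -/
theorem IsBlockSeq.exists_isBlockSeq_approx_of_finrank_le (he : IsBasicSeq e)
    (hd : Dense (span ℝ (range e) : Set X)) {y : ℕ → X} (hy : IsBlockSeq e y) {a : ℕ}
    {V : ℕ → Submodule ℝ X} (hVle : ∀ t, V t ≤ span ℝ (y '' Icc 0 t))
    (hVrank : ∀ t, finrank ℝ (span ℝ (y '' Icc 0 t)) ≤ finrank ℝ (V t) + a) :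
    ∃ z, IsBlockSeq e z ∧ ∀ L, ∀ ε > 0, ∀ N, ∃ t ≥ N, ∃ z' : ℕ → X,
      ∀ i ≤ L, z' i ∈ V t ∧ ‖z' i - z i‖ ≤ ε := by
  have hli := hy.linearIndependent he hd
  have hrank : ∀ t, finrank ℝ (span ℝ (y '' Icc 0 t)) = t + 1 := fun t => by
    have := hli.finrank_span_image_finset (Finset.Icc 0 t)
    rwa [Finset.coe_Icc, Nat.card_Icc, Nat.sub_zero] at this
  let φ : ℕ → ℕ := fun i => i * (a + 1)
  have hφ : StrictMono φ := fun i j h => Nat.mul_lt_mul_of_pos_right h a.succ_pos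
  let W : ℕ → Submodule ℝ X := fun i => span ℝ (y '' Ico (φ i) (φ (i + 1)))
  have : ∀ i, FiniteDimensional ℝ (W i) := fun i =>
    .span_of_finite ℝ ((finite_Ico _ _).image y)
  have hWrank : ∀ i, finrank ℝ (W i) = a + 1 := fun i => by
    have := hli.finrank_span_image_finset (Finset.Ico (φ i) (φ (i + 1)))
    rw [Finset.coe_Ico, Nat.card_Ico] at this
    rw [this]
    simp only [φ, Nat.succ_mul, Nat.add_sub_cancel_left]
  have hu : ∀ t i, ∃ u ∈ W i, ‖u‖ = 1 ∧ (φ (i + 1) ≤ t + 1 → u ∈ V t) := by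
    intro t i
    by_cases hit : φ (i + 1) ≤ t + 1
    · have : FiniteDimensional ℝ (span ℝ (y '' Icc 0 t)) :=
        .span_of_finite ℝ ((finite_Icc _ _).image y)
      have hWle : W i ≤ span ℝ (y '' Icc 0 t) :=
        span_mono (image_mono fun j hj => ⟨j.zero_le, by have := hj.2; omega⟩)
      obtain ⟨u, hu, hu1⟩ := Submodule.exists_norm_eq_one_mem_inf (hVle t) hWle
        (by have := hVrank t; rw [hrank t] at this ⊢; rw [hWrank]; omega)
      exact ⟨u, hu.2, hu1, fun _ => hu.1⟩
    · exact ⟨y (φ i), subset_span (mem_image_of_mem y ⟨le_rfl, hφ i.lt_succ_self⟩),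
        hy.norm_eq_one _, fun h => absurd h hit⟩
  choose u huW hunorm huV using hu
  obtain ⟨z, ψ, hψ, hz, hlim⟩ := exists_subseq_tendsto_pi (fun i => (W i).isCompact_inter_sphere)
    fun t i => ⟨huW t i, mem_sphere_zero_iff_norm.2 (hunorm t i)⟩
  refine ⟨z, hy.of_mem_span_image_Ico hφ (fun i => (hz i).1)
    (fun i => mem_sphere_zero_iff_norm.1 (hz i).2), fun L ε hε N => ?_⟩
  have hev : ∀ᶠ t in Filter.atTop,
      (∀ i ≤ L, ‖u (ψ t) i - z i‖ ≤ ε) ∧ φ (L + 1) + N ≤ ψ t := by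
    refine Filter.Eventually.and ?_ (hψ.tendsto_atTop.eventually_ge_atTop _)
    refine (Filter.eventually_all_finite (finite_Iic L)).2 fun i _ => ?_
    filter_upwards [(hlim i).eventually (Metric.closedBall_mem_nhds (z i) hε)] with t ht
    rwa [← dist_eq_norm]
  obtain ⟨t, hclose, hchunk⟩ := hev.exists
  refine ⟨ψ t, by omega, u (ψ t), fun i hi => ⟨huV _ _ ?_, hclose i hi⟩⟩
  have := hφ.monotone (by omega : i + 1 ≤ L + 1)
  omega

theorem IsBlockSeq.exists_not_embeds_tailSpan_of_finrank_le (he : IsBasicSeq e)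
    (hd : Dense (span ℝ (range e) : Set X)) (ht : TightWithConstants e) {y : ℕ → X}
    (hy : IsBlockSeq e y) {K : ℝ} (hK : 0 < K) (a : ℕ) :
    ∃ l, ∀ V : Submodule ℝ X, V ≤ span ℝ (y '' Icc 0 l) →
      finrank ℝ (span ℝ (y '' Icc 0 l)) ≤ finrank ℝ V + a → ¬ Embeds K V (tailSpan e l) := by
  by_contra! hcon
  choose V hVle hVrank hVemb using hcon
  obtain ⟨z, hz, hzV⟩ := hy.exists_isBlockSeq_approx_of_finrank_le he hd hVle hVrank
  obtain ⟨l, -, hl⟩ := ht z hz (2 * K) (by positivity) 0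
  obtain ⟨ε, hε, hnear⟩ := hz.exists_embeds_two_of_near he hd l
  obtain ⟨t, hlt, z', hz'⟩ := hzV l ε hε l
  have h2 : Embeds 2 (span ℝ (z '' Icc 0 l)) (V t) :=
    (hnear z' fun i hi => (hz' i hi).2).mono_right
      (span_le.2 (image_subset_iff.2 fun i hi => (hz' i hi.2).1))
  exact hl ((h2.trans ((hVemb t).mono_right (tailSpan_anti e hlt)) hK.le).mono (mul_comm K 2).le)

/-- The head projection `P_a` composed with an embedding kills a subspace of codimension at most
`a`, which `1 - P_a` then maps into a tail. -/
theorem IsBlockSeq.exists_not_embeds_gapSpan (he : IsBasicSeq e)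
    (hd : Dense (span ℝ (range e) : Set X)) (ht : TightWithConstants e) {y : ℕ → X}
    (hy : IsBlockSeq e y) {K : ℝ} (hK : 0 < K) (a : ℕ) :
    ∃ l b, a < b ∧ ¬ Embeds K (span ℝ (y '' Icc 0 l)) (gapSpan e a b) := by
  classical
  obtain ⟨l, hl⟩ := hy.exists_not_embeds_tailSpan_of_finrank_le he hd ht hK a
  refine ⟨l, max (a + 1) l, by omega, ?_⟩
  set D := span ℝ (y '' Icc 0 l)
  rintro ⟨T, hT⟩
  have : FiniteDimensional ℝ D := .span_of_finite ℝ ((finite_Icc _ _).image y)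
  let φ : D →ₗ[ℝ] X := he.proj a ∘L (gapSpan e a _).subtypeL ∘L T
  have hrange : finrank ℝ (LinearMap.range φ) ≤ a := by
    have : FiniteDimensional ℝ (span ℝ (e '' Iio a)) := .span_of_finite ℝ ((finite_Iio a).image e)
    have hle : LinearMap.range φ ≤ span ℝ (e '' Iio a) := by
      rintro _ ⟨d, rfl⟩
      exact he.proj_mem_span_Iio hd a (T d)
    refine (Submodule.finrank_mono hle).trans ?_
    have := finrank_span_image_finset_le e (Finset.range a)
    rwa [Finset.coe_range, Finset.card_range] at this
  let V := (LinearMap.ker φ).map D.subtype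
  have hVD : V ≤ D := map_subtype_le _ _
  refine hl V hVD ?_ (Embeds.of_forall_mem (T ∘L (V.subtypeL.codRestrict D fun v => hVD v.2))
    (fun v => hT ⟨v, hVD v.2⟩) fun v => ?_)
  · rw [Submodule.finrank_map_subtype_eq]
    have := LinearMap.finrank_range_add_finrank_ker φ
    omega
  · obtain ⟨d, hd0, hdv⟩ := v.2
    change ((T ⟨v, hVD v.2⟩ : _) : X) ∈ _
    rw [show (⟨v, hVD v.2⟩ : D) = d from (Subtype.ext hdv).symm]
    have hmem := he.sub_proj_mem_closure_inter hd a (T d).2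
    rw [show he.proj a (T d) = φ d from rfl, hd0, sub_zero] at hmem
    refine topologicalClosure_mono (span_mono (image_mono ?_)) hmem
    rintro n ⟨hn | hn, han⟩ <;> simp only [mem_ofPred_eq, mem_Ici] at * <;> omega

end Tight

section Construction

variable {X : Type*} [NormedAddCommGroup X] [NormedSpace ℝ X]

/-- `n` codes the pair `(l, b) = n.unpair`; as `l ≤ n`, whether `n` is a code depends only on
`y₀, …, y_n`, which makes the least code locally constant in `y`. -/
def IsGapCode (e y : ℕ → X) (j a n : ℕ) : Prop :=
  a < n.unpair.2 ∧ ¬ Embeds ((j : ℝ) + 1) (span ℝ (y '' Icc 0 n.unpair.1)) (gapSpan e a n.unpair.2)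

noncomputable def gapCode (e y : ℕ → X) (j a : ℕ) : ℕ := sInf {n | IsGapCode e y j a n}

noncomputable def gapStart (e y : ℕ → X) : ℕ → ℕ
  | 0 => 0
  | j + 1 => (gapCode e y j (gapStart e y j)).unpair.2 + 1

noncomputable def gapEnd (e y : ℕ → X) (j : ℕ) : ℕ := (gapCode e y j (gapStart e y j)).unpair.2

noncomputable def gapEndpoints (e y : ℕ → X) (i : ℕ) : ℕ :=
  if Even i then gapStart e y (i / 2) else gapEnd e y (i / 2)

theorem gapEndpoints_two_mul (e y : ℕ → X) (j : ℕ) :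
    gapEndpoints e y (2 * j) = gapStart e y j := by
  simp [gapEndpoints]

theorem gapEndpoints_two_mul_add_one (e y : ℕ → X) (j : ℕ) :
    gapEndpoints e y (2 * j + 1) = gapEnd e y j := by
  simp [gapEndpoints, Nat.add_div_of_dvd_right]

theorem isGapCode_congr {e y z : ℕ → X} {j a n : ℕ} (h : ∀ i ≤ n, y i = z i) :
    IsGapCode e y j a n ↔ IsGapCode e z j a n := by
  rw [IsGapCode, IsGapCode, image_congr fun i hi => h i (hi.2.trans (Nat.unpair_left_le n))]

theorem gapCode_congr {e y z : ℕ → X} {j a : ℕ} (hne : {n | IsGapCode e y j a n}.Nonempty)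
    (h : ∀ i ≤ gapCode e y j a, y i = z i) : gapCode e z j a = gapCode e y j a :=
  Nat.sInf_eq_sInf_of_forall_le_iff hne fun _ hn => isGapCode_congr fun i hi => h i (hi.trans hn)

theorem gapStart_congr {e y z : ℕ → X} (hne : ∀ j a, {n | IsGapCode e y j a n}.Nonempty)
    {M : ℕ} (h : ∀ i ≤ M, y i = z i) :
    ∀ j, (∀ j' ≤ j, gapCode e y j' (gapStart e y j') ≤ M) →
      gapStart e z j = gapStart e y j ∧
        gapCode e z j (gapStart e z j) = gapCode e y j (gapStart e y j)
  | 0, hM => ⟨rfl, gapCode_congr (hne _ _) fun i hi => h i (hi.trans (hM 0 le_rfl))⟩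
  | j + 1, hM => by
    have hstart : gapStart e z (j + 1) = gapStart e y (j + 1) := by
      simp only [gapStart, (gapStart_congr hne h j fun j' hj' => hM j' (hj'.trans j.le_succ)).2]
    refine ⟨hstart, ?_⟩
    rw [hstart]
    exact gapCode_congr (hne _ _) fun i hi => h i (hi.trans (hM _ le_rfl))

theorem exists_gapEndpoints_eq {e y : ℕ → X} (hne : ∀ j a, {n | IsGapCode e y j a n}.Nonempty)
    (j : ℕ) : ∃ N, ∀ z : ℕ → X, (∀ i ≤ N, y i = z i) →
      ∀ i ≤ j, gapEndpoints e z i = gapEndpoints e y i := by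
  refine ⟨(Finset.range (j + 1)).sup fun j' => gapCode e y j' (gapStart e y j'), fun z h i hi => ?_⟩
  have hcongr := gapStart_congr hne h (i / 2) fun j' hj' =>
    Finset.le_sup (f := fun j' => gapCode e y j' (gapStart e y j')) (Finset.mem_range.2 (by omega))
  simp only [gapEndpoints, gapEnd]
  rw [hcongr.2, hcongr.1]

variable [CompleteSpace X] {e : ℕ → X}

theorem IsBlockSeq.isGapCode_gapCode (he : IsBasicSeq e) (hd : Dense (span ℝ (range e) : Set X))
    (ht : TightWithConstants e) {y : ℕ → X} (hy : IsBlockSeq e y) (j a : ℕ) :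
    IsGapCode e y j a (gapCode e y j a) := by
  refine Nat.sInf_mem (s := {n | IsGapCode e y j a n}) ?_
  obtain ⟨l, b, hab, hl⟩ :=
    hy.exists_not_embeds_gapSpan he hd ht (by positivity : (0 : ℝ) < j + 1) a
  exact ⟨Nat.pair l b, by rw [mem_ofPred_eq, IsGapCode, Nat.unpair_pair]; exact ⟨hab, hl⟩⟩

theorem IsBlockSeq.strictMono_gapEndpoints (he : IsBasicSeq e)
    (hd : Dense (span ℝ (range e) : Set X)) (ht : TightWithConstants e) {y : ℕ → X}
    (hy : IsBlockSeq e y) : StrictMono (gapEndpoints e y) := by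
  refine strictMono_nat_of_lt_succ fun i => ?_
  obtain ⟨j, rfl | rfl⟩ := Nat.even_or_odd' i
  · rw [gapEndpoints_two_mul, gapEndpoints_two_mul_add_one]
    exact (hy.isGapCode_gapCode he hd ht j _).1
  · rw [gapEndpoints_two_mul_add_one, show 2 * j + 1 + 1 = 2 * (j + 1) by ring,
      gapEndpoints_two_mul]
    exact Nat.lt_succ_self _

end Construction

/-- a Schauder basis `(eₙ)` which is tight with constants is continuously
tight: there is a continuous assignment (continuity expressed via the discrete product
topology on block sequences) `ȳ ↦ f(ȳ)` of strictly increasing sequences of endpoints of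
intervals `Iⱼ = [f(ȳ)(2j), f(ȳ)(2j+1)]` so that for every infinite `A ⊆ ℕ`, the closed span
of `ȳ` does not embed into the closed span of `{eₙ : n ∉ ⋃_{j∈A} Iⱼ}`. -/
theorem tight_with_constants_implies_continuously_tight
    {X : Type*} [NormedAddCommGroup X] [NormedSpace ℝ X] [CompleteSpace X]
    (e : ℕ → X) (he : IsBasicSeq e)
    (hdense : DenseRange fun a : ℕ →₀ ℝ => ∑ n ∈ a.support, a n • e n)
    (htight : ∀ y : ℕ → X, IsBlockSeq e y → ∀ K : ℝ, 0 < K → ∀ m : ℕ, ∃ l : ℕ, m < l ∧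
      ¬ Embeds K ↥(Submodule.span ℝ (y '' Set.Icc m l))
          ↥((Submodule.span ℝ (e '' {n | l ≤ n})).topologicalClosure)) :
    ∃ f : (ℕ → X) → (ℕ → ℕ),
      (∀ y : ℕ → X, IsBlockSeq e y → ∀ j : ℕ, ∃ N : ℕ, ∀ z : ℕ → X, IsBlockSeq e z →
        (∀ i ≤ N, y i = z i) → ∀ i ≤ j, f y i = f z i) ∧
      ∀ y : ℕ → X, IsBlockSeq e y → StrictMono (f y) ∧
        ∀ A : Set ℕ, A.Infinite →
          ¬ ∃ K : ℝ, 0 < K ∧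
            Embeds K ↥((Submodule.span ℝ (Set.range y)).topologicalClosure)
              ↥((Submodule.span ℝ
                  (e '' {n | ∀ j ∈ A, n ∉ Set.Icc (f y (2 * j)) (f y (2 * j + 1))})).topologicalClosure) := by
  have hd := dense_span_range_of_denseRange hdense
  have hcode := fun y (hy : IsBlockSeq e y) => hy.isGapCode_gapCode he hd htight
  refine ⟨gapEndpoints e, fun y hy j => ?_,
    fun y hy => ⟨hy.strictMono_gapEndpoints he hd htight, fun A hA => ?_⟩⟩
  · obtain ⟨N, hN⟩ := exists_gapEndpoints_eq (fun j a => ⟨_, hcode y hy j a⟩) j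
    exact ⟨N, fun z _ hyz i hi => (hN z hyz i hi).symm⟩
  rintro ⟨K, -, hK⟩
  obtain ⟨j, hjA, hjK⟩ := hA.exists_gt ⌈K⌉₊
  refine (hcode y hy j (gapStart e y j)).2 (((hK.mono_left ?_).mono_right ?_).mono ?_)
  · exact (span_mono (image_subset_range _ _)).trans (le_topologicalClosure _)
  · refine topologicalClosure_mono (span_mono (image_mono fun n hn => ?_))
    have hnj := hn j hjA
    rw [gapEndpoints_two_mul, gapEndpoints_two_mul_add_one, mem_Icc] at hnj
    change n < gapStart e y j ∨ gapEnd e y j < n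
    omega
  · calc K ≤ ⌈K⌉₊ := Nat.le_ceil K
      _ ≤ j + 1 := by exact_mod_cast hjK.le.trans j.le_succ
end

section
/- A Banach space X is hereditarily indecomposable if and only if for all infinite-dimensional closed subspaces Z, W ⊆ X and every ε > 0, there exist z ∈ Z and w ∈ W such that ‖z − w‖ < ε‖z + w‖. -/
/-- An infinite-dimensional Banach space is *hereditarily indecomposable* if no closed
infinite-dimensional subspace of it is the (topological) direct sum of two
infinite-dimensional closed subspaces. -/
def HereditarilyIndecomposable (X : Type*) [NormedAddCommGroup X] [NormedSpace ℝ X] : Prop :=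
  ∀ Z W₁ W₂ : Submodule ℝ X,
    IsClosed (Z : Set X) → ¬ FiniteDimensional ℝ Z →
    IsClosed (W₁ : Set X) → ¬ FiniteDimensional ℝ W₁ →
    IsClosed (W₂ : Set X) → ¬ FiniteDimensional ℝ W₂ →
    W₁ ⊓ W₂ = ⊥ → W₁ ⊔ W₂ = Z → False

/-!
For closed subspaces `Z`, `W` of a Banach space, `Z ⊓ W = ⊥` with `Z ⊔ W` closed means that the
sum map `Z × W → X`, `(z, w) ↦ z + w`, is injective with closed range; by the open mapping
theorem this happens iff the map is bounded below, `c ‖(z, w)‖ ≤ ‖z + w‖`. Replacing `w` by `-w`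
and using `2z = (z + w) + (z - w)`, this is equivalent to `ε ‖z + w‖ ≤ ‖z - w‖` for some `ε > 0`.
Hereditary indecomposability says exactly that no two closed infinite-dimensional subspaces are
of this kind, since their sum is again infinite-dimensional.
-/

namespace Submodule

variable {𝕜 E : Type*} [RCLike 𝕜] [NormedAddCommGroup E] [NormedSpace 𝕜 E] {Z W : Submodule 𝕜 E}

theorem range_subtypeL_coprod :
    Set.range (Z.subtypeL.coprod W.subtypeL) = ((Z ⊔ W : Submodule 𝕜 E) : Set E) := by
  rw [sup_eq_range]; rfl

theorem injective_subtypeL_coprod_iff :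
    Function.Injective (Z.subtypeL.coprod W.subtypeL) ↔ Disjoint Z W := by
  refine ⟨fun h => disjoint_def.mpr fun x hxZ hxW => ?_, fun h => ?_⟩
  · have := @h (⟨x, hxZ⟩, ⟨-x, W.neg_mem hxW⟩) 0 (by simp)
    simpa using congrArg (fun p => (p.1 : E)) this
  · rw [← ContinuousLinearMap.coe_coe, ← LinearMap.ker_eq_bot]
    change LinearMap.ker (Z.subtype.coprod W.subtype) = ⊥
    rw [LinearMap.ker_coprod_of_disjoint_range, ker_subtype, ker_subtype, prod_bot]
    rwa [range_subtype, range_subtype]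

theorem disjoint_and_isClosed_sup_iff [CompleteSpace E] (hZ : IsClosed (Z : Set E))
    (hW : IsClosed (W : Set E)) :
    Disjoint Z W ∧ IsClosed ((Z ⊔ W : Submodule 𝕜 E) : Set E) ↔
      ∃ c > 0, ∀ z ∈ Z, ∀ w ∈ W, c * max ‖z‖ ‖w‖ ≤ ‖z + w‖ := by
  have : CompleteSpace Z := hZ.completeSpace_coe
  have : CompleteSpace W := hW.completeSpace_coe
  set f := Z.subtypeL.coprod W.subtypeL
  have hnorm : (∃ c > 0, ∀ p, c * ‖p‖ ≤ ‖f p‖) ↔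
      ∃ c > 0, ∀ z ∈ Z, ∀ w ∈ W, c * max ‖z‖ ‖w‖ ≤ ‖z + w‖ := by
    simp [f, Prod.norm_def]
  rw [← hnorm, ← antilipschitzWith_iff_exists_mul_le_norm, ← injective_subtypeL_coprod_iff,
    ← range_subtypeL_coprod]
  exact ⟨fun ⟨hinj, hclosed⟩ => (f.isClosed_range_iff_antilipschitz_of_injective hinj).mp hclosed,
    fun ⟨_, hK⟩ => ⟨hK.injective, hK.isClosed_range f.uniformContinuous⟩⟩

theorem exists_pos_mul_max_norm_le_iff :
    (∃ c > 0, ∀ z ∈ Z, ∀ w ∈ W, c * max ‖z‖ ‖w‖ ≤ ‖z + w‖) ↔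
      ∃ ε > 0, ∀ z ∈ Z, ∀ w ∈ W, ε * ‖z + w‖ ≤ ‖z - w‖ := by
  constructor
  · rintro ⟨c, hc, h⟩
    refine ⟨c / 2, by positivity, fun z hz w hw => ?_⟩
    have hzw := h z hz (-w) (W.neg_mem hw)
    rw [norm_neg, ← sub_eq_add_neg] at hzw
    calc c / 2 * ‖z + w‖ ≤ c / 2 * (‖z‖ + ‖w‖) := by gcongr; exact norm_add_le z w
      _ ≤ c * max ‖z‖ ‖w‖ := by nlinarith [le_max_left ‖z‖ ‖w‖, le_max_right ‖z‖ ‖w‖]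
      _ ≤ ‖z - w‖ := hzw
  · rintro ⟨ε, hε, h⟩
    refine ⟨ε / (1 + ε), by positivity, fun z hz w hw => ?_⟩
    have hsub : ε * ‖z - w‖ ≤ ‖z + w‖ := by
      simpa [sub_eq_add_neg] using h z hz (-w) (W.neg_mem hw)
    have two_mul_norm_le (x y : E) : 2 * ‖x‖ ≤ ‖x + y‖ + ‖x - y‖ := calc
      2 * ‖x‖ = ‖(x + y) + (x - y)‖ := by
        rw [add_add_sub_cancel, ← two_nsmul, RCLike.norm_nsmul 𝕜, nsmul_eq_mul, Nat.cast_ofNat]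
      _ ≤ ‖x + y‖ + ‖x - y‖ := norm_add_le _ _
    have hz := two_mul_norm_le z w
    have hw := two_mul_norm_le w z
    rw [add_comm w, norm_sub_rev] at hw
    rw [div_mul_eq_mul_div, div_le_iff₀ (by positivity), mul_max_of_nonneg _ _ hε.le, max_le_iff]
    constructor <;> nlinarith [norm_nonneg (z + w)]

end Submodule

theorem hereditarilyIndecomposable_iff_forall_not_disjoint_and_isClosed_sup (X : Type*)
    [NormedAddCommGroup X] [NormedSpace ℝ X] :
    HereditarilyIndecomposable X ↔
      ∀ Z W : Submodule ℝ X,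
        IsClosed (Z : Set X) → ¬ FiniteDimensional ℝ Z →
        IsClosed (W : Set X) → ¬ FiniteDimensional ℝ W →
        ¬ (Disjoint Z W ∧ IsClosed ((Z ⊔ W : Submodule ℝ X) : Set X)) := by
  constructor
  · rintro hHI Z W hZ hZfin hW hWfin ⟨hdisj, hsup⟩
    have hsupfin : ¬ FiniteDimensional ℝ (Z ⊔ W : Submodule ℝ X) := fun _ =>
      hZfin (Submodule.finiteDimensional_of_le (le_sup_left : Z ≤ Z ⊔ W))
    exact hHI _ Z W hsup hsupfin hZ hZfin hW hWfin (disjoint_iff.mp hdisj) rfl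
  · rintro h Z W₁ W₂ hZ - hW₁ hW₁fin hW₂ hW₂fin hinf rfl
    exact h W₁ W₂ hW₁ hW₁fin hW₂ hW₂fin ⟨disjoint_iff.mpr hinf, hZ⟩

theorem hereditarilyIndecomposable_iff_general (X : Type*) [NormedAddCommGroup X] [NormedSpace ℝ X]
    [CompleteSpace X] :
    HereditarilyIndecomposable X ↔
      ∀ Z W : Submodule ℝ X,
        IsClosed (Z : Set X) → ¬ FiniteDimensional ℝ Z →
        IsClosed (W : Set X) → ¬ FiniteDimensional ℝ W →
        ∀ ε : ℝ, 0 < ε → ∃ z ∈ Z, ∃ w ∈ W, ‖z - w‖ < ε * ‖z + w‖ := by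
  rw [hereditarilyIndecomposable_iff_forall_not_disjoint_and_isClosed_sup]
  refine forall₂_congr fun Z W => forall_congr' fun hZ => forall_congr' fun _ =>
    forall_congr' fun hW => forall_congr' fun _ => ?_
  rw [Submodule.disjoint_and_isClosed_sup_iff hZ hW, Submodule.exists_pos_mul_max_norm_le_iff]
  push Not
  rfl

/-- a Banach space `X` is hereditarily indecomposable iff for all
infinite-dimensional closed subspaces `Z, W ⊆ X` and every `ε > 0` there are `z ∈ Z`, `w ∈ W`
with `‖z - w‖ < ε * ‖z + w‖`. -/
theorem hereditarilyIndecomposable_iff (X : Type*) [NormedAddCommGroup X] [NormedSpace ℝ X]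
    [CompleteSpace X] (hX : ¬ FiniteDimensional ℝ X) :
    HereditarilyIndecomposable X ↔
      ∀ Z W : Submodule ℝ X,
        IsClosed (Z : Set X) → ¬ FiniteDimensional ℝ Z →
        IsClosed (W : Set X) → ¬ FiniteDimensional ℝ W →
        ∀ ε : ℝ, 0 < ε → ∃ z ∈ Z, ∃ w ∈ W, ‖z - w‖ < ε * ‖z + w‖ :=
  hereditarilyIndecomposable_iff_general X
end

section
/- If (xₖ) is a normalized block sequence in the ℓ¹-Baire sum φ_{E,1}(θ) over a tree θ with pairwise completely incomparable supports, where E is the unit vector basis of ℓ¹, then (xₖ) is 1-equivalent to the unit vector basis of ℓ¹. -/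
/-- The unit vector basis of `ℓ¹`. -/
noncomputable def l1Basis (n : ℕ) : lp (fun _ : ℕ => ℝ) 1 := lp.single 1 n (1 : ℝ)

/- ### Auxiliary lemmas -/

lemma length_injOn {I : Finset (List ℕ)} (hI : ∀ s ∈ I, ∀ t ∈ I, TreeComparable s t) :
    Set.InjOn List.length (I : Set (List ℕ)) := by
  intro s hs t ht hlen
  rcases hI s hs t ht with h | h
  · exact h.eq_of_length hlen
  · exact (h.eq_of_length hlen.symm).symm

open Classical in
lemma norm_sum_l1 (I : Finset (List ℕ)) (hI : ∀ s ∈ I, ∀ t ∈ I, TreeComparable s t)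
    (c : List ℕ → ℝ) :
    ‖∑ s ∈ I, c s • l1Basis s.length‖ = ∑ s ∈ I, |c s| := by
  have hinj := length_injOn hI
  set c' : ℕ → ℝ := fun m => if h : ∃ s ∈ I, s.length = m then c h.choose else 0 with hc'
  have hc'eq : ∀ s ∈ I, c' s.length = c s := by
    intro s hs
    have h : ∃ t ∈ I, t.length = s.length := ⟨s, hs, rfl⟩
    rw [hc']
    simp only [dif_pos h]
    have := h.choose_spec
    rw [hinj this.1 hs this.2]
  have h1 : ∑ s ∈ I, c s • l1Basis s.length
      = ∑ m ∈ I.image List.length, lp.single 1 m (c' m) := by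
    rw [Finset.sum_image (fun s hs t ht h => hinj hs ht h)]
    refine Finset.sum_congr rfl fun s hs => ?_
    rw [hc'eq s hs, l1Basis, ← lp.single_smul, smul_eq_mul, mul_one]
  have h2 : ∑ s ∈ I, |c s| = ∑ m ∈ I.image List.length, |c' m| := by
    rw [Finset.sum_image (fun s hs t ht h => hinj hs ht h)]
    exact Finset.sum_congr rfl fun s hs => by rw [hc'eq s hs]
  rw [h1, h2]
  have hp : 0 < (1 : ENNReal).toReal := by norm_num
  have := lp.norm_sum_single (E := fun _ : ℕ => ℝ) hp c' (I.image List.length)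
  simp only [ENNReal.toReal_one, Real.rpow_one, Real.norm_eq_abs] at this
  exact this

/-- The set over which the sup is taken in `lpBaireVal 1 θ l1Basis z`. -/
def BaireSet (θ : Set (List ℕ)) (z : List ℕ →₀ ℝ) : Set ℝ :=
  { r : ℝ | ∃ (n : ℕ) (I : Fin n → Finset (List ℕ)),
    (∀ i, IsSegment θ ↑(I i)) ∧ (∀ i j : Fin n, i ≠ j → CompIncomp ↑(I i) ↑(I j)) ∧
    r = (∑ i, ‖∑ s ∈ I i, z s • l1Basis s.length‖ ^ (1:ℝ)) ^ (1:ℝ)⁻¹ }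

lemma lpBaireVal_eq (θ : Set (List ℕ)) (z : List ℕ →₀ ℝ) :
    lpBaireVal 1 θ l1Basis z = sSup (BaireSet θ z) := rfl

lemma mem_baireSet_iff (θ : Set (List ℕ)) (z : List ℕ →₀ ℝ) (r : ℝ) :
    r ∈ BaireSet θ z ↔ ∃ (n : ℕ) (I : Fin n → Finset (List ℕ)),
      (∀ i, IsSegment θ ↑(I i)) ∧ (∀ i j : Fin n, i ≠ j → CompIncomp ↑(I i) ↑(I j)) ∧
      r = ∑ i, ∑ s ∈ I i, |z s| := by
  constructor
  · rintro ⟨n, I, hseg, hinc, hr⟩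
    refine ⟨n, I, hseg, hinc, ?_⟩
    rw [hr]
    simp only [Real.rpow_one, inv_one]
    exact Finset.sum_congr rfl fun i _ => norm_sum_l1 _ (hseg i).2.1 _
  · rintro ⟨n, I, hseg, hinc, hr⟩
    refine ⟨n, I, hseg, hinc, ?_⟩
    rw [hr]
    simp only [Real.rpow_one, inv_one]
    exact Finset.sum_congr rfl fun i _ => (norm_sum_l1 _ (hseg i).2.1 _).symm

lemma zero_mem_baireSet (θ : Set (List ℕ)) (z : List ℕ →₀ ℝ) : (0:ℝ) ∈ BaireSet θ z := by
  rw [mem_baireSet_iff]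
  exact ⟨0, fun i => i.elim0, fun i => i.elim0, fun i => i.elim0, by simp⟩

lemma baireSet_finite (θ : Set (List ℕ)) (z : List ℕ →₀ ℝ) : (BaireSet θ z).Finite := by
  classical
  refine Set.Finite.subset (Set.Finite.image (fun D => ∑ s ∈ D, |z s|)
    (z.support.powerset : Finset (Finset (List ℕ))).finite_toSet) ?_
  intro r hr
  rw [mem_baireSet_iff] at hr
  obtain ⟨n, I, hseg, hinc, hr⟩ := hr
  have hdisj : ((Finset.univ : Finset (Fin n)) : Set (Fin n)).PairwiseDisjoint
      (fun i => I i ∩ z.support) := by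
    intro i _ j _ hij
    refine Finset.disjoint_left.2 fun s hs hs' => ?_
    exact hinc i j hij s (Finset.mem_of_mem_inter_left hs) s
      (Finset.mem_of_mem_inter_left hs') (Or.inl (List.prefix_refl s))
  refine ⟨Finset.univ.biUnion (fun i => I i ∩ z.support), ?_, ?_⟩
  · exact Finset.mem_coe.2 (Finset.mem_powerset.2
      (Finset.biUnion_subset.2 fun i _ => Finset.inter_subset_right))
  · simp only []
    rw [Finset.sum_biUnion hdisj, hr]
    refine Finset.sum_congr rfl fun i _ => ?_
    refine Finset.sum_subset Finset.inter_subset_left fun s hs hs' => ?_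
    have : z s = 0 := by
      by_contra h
      exact hs' (Finset.mem_inter.2 ⟨hs, Finsupp.mem_support_iff.2 h⟩)
    simp [this]

lemma baireSet_bddAbove (θ : Set (List ℕ)) (z : List ℕ →₀ ℝ) :
    BddAbove (BaireSet θ z) := (baireSet_finite θ z).bddAbove

lemma sSup_mem_baireSet (θ : Set (List ℕ)) (z : List ℕ →₀ ℝ) :
    sSup (BaireSet θ z) ∈ BaireSet θ z :=
  Set.Nonempty.csSup_mem ⟨0, zero_mem_baireSet θ z⟩ (baireSet_finite θ z)

lemma mem_baireSet_of_family (θ : Set (List ℕ)) (z : List ℕ →₀ ℝ)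
    {ι : Type} [Fintype ι] (I : ι → Finset (List ℕ))
    (hseg : ∀ i, IsSegment θ ↑(I i)) (hinc : ∀ i j, i ≠ j → CompIncomp ↑(I i) ↑(I j)) :
    (∑ i, ∑ s ∈ I i, |z s|) ∈ BaireSet θ z := by
  classical
  rw [mem_baireSet_iff]
  refine ⟨Fintype.card ι, fun i => I ((Fintype.equivFin ι).symm i), fun i => hseg _, ?_, ?_⟩
  · intro i j hij
    refine hinc _ _ (fun h => hij ?_)
    exact (Fintype.equivFin ι).symm.injective.eq_iff.1 h
  · exact (Equiv.sum_comp (Fintype.equivFin ι).symm (fun i => ∑ s ∈ I i, |z s|)).symm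


set_option maxHeartbeats 1000000 in
/-- a normalized block sequence with pairwise completely incomparable
supports in the `ℓ¹`-Baire sum `φ_{E,1}(θ)` over a tree `θ`, where `E` is the unit vector
basis of `ℓ¹`, is `1`-equivalent to the unit vector basis of `ℓ¹`:
`‖Σ a_k x_k‖ = Σ |a_k|`. -/
theorem normalized_block_incomparable_one_equiv_l1
    {X : Type*} [NormedAddCommGroup X] [NormedSpace ℝ X] [CompleteSpace X]
    (θ : Set (List ℕ)) (hθ : IsTree θ)
    (u : List ℕ → X)
    (hnorm : ∀ z : List ℕ →₀ ℝ, ↑z.support ⊆ θ →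
      ‖∑ s ∈ z.support, z s • u s‖ = lpBaireVal 1 θ l1Basis z)
    (σ : ℕ ≃ List ℕ) (hσ : CompatibleEnum σ)
    (x : ℕ → (List ℕ →₀ ℝ))
    (hsupp : ∀ k, ↑(x k).support ⊆ θ)
    (hblock : ∀ k, ∀ s ∈ (x k).support, ∀ t ∈ (x (k + 1)).support, σ.symm s < σ.symm t)
    (hincomp : ∀ k l, k ≠ l → CompIncomp ↑(x k).support ↑(x l).support)
    (hnormal : ∀ k, ‖∑ s ∈ (x k).support, x k s • u s‖ = 1) :
    ∀ (n : ℕ) (a : ℕ → ℝ),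
      ‖∑ k ∈ Finset.range n, a k • ∑ s ∈ (x k).support, x k s • u s‖ =
        ∑ k ∈ Finset.range n, |a k| := by
  intro n a
  classical
  set z : List ℕ →₀ ℝ := ∑ k ∈ Finset.range n, a k • x k with hzdef
  have hzapp : ∀ s, z s = ∑ k ∈ Finset.range n, a k * x k s := by
    intro s
    rw [hzdef]
    simp [Finsupp.finset_sum_apply, Finsupp.smul_apply]
  have hdisj : ∀ k l, k ≠ l → ∀ s ∈ (x k).support, s ∉ (x l).support := by
    intro k l hkl s hs hs'
    exact hincomp k l hkl s hs s hs' (Or.inl (List.prefix_refl s))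
  have hztrim : ∀ k ∈ Finset.range n, ∀ s : List ℕ, (∃ p ∈ (x k).support, p <+: s) →
      z s = a k * x k s := by
    intro k hk s hps
    obtain ⟨p, hp, hps⟩ := hps
    rw [hzapp]
    refine Finset.sum_eq_single_of_mem k hk fun m hm hmk => ?_
    have : x m s = 0 := by
      by_contra h
      exact hincomp k m (fun e => hmk e.symm) p hp s (Finsupp.mem_support_iff.2 h)
        (Or.inl hps)
    simp [this]
  have hsuppz : z.support ⊆ (Finset.range n).biUnion (fun k => (x k).support) := by
    rw [hzdef]
    refine (Finsupp.support_finset_sum).trans ?_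
    exact Finset.biUnion_mono fun k _ => Finsupp.support_smul
  have hsubθ : ↑z.support ⊆ θ := by
    intro s hs
    obtain ⟨k, _, hks⟩ := Finset.mem_biUnion.1 (hsuppz (Finset.mem_coe.1 hs))
    exact hsupp k (Finset.mem_coe.2 hks)
  have hsum : ∑ k ∈ Finset.range n, a k • ∑ s ∈ (x k).support, x k s • u s
      = ∑ s ∈ z.support, z s • u s := by
    rw [Finset.sum_subset hsuppz (fun s _ hs => by
      simp [Finsupp.notMem_support_iff.1 hs])]
    rw [Finset.sum_biUnion (fun k _ l _ hkl => Finset.disjoint_left.2 (hdisj k l hkl))]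
    refine Finset.sum_congr rfl fun k hk => ?_
    rw [Finset.smul_sum]
    refine Finset.sum_congr rfl fun s hs => ?_
    rw [hztrim k hk s ⟨s, hs, List.prefix_refl s⟩, mul_smul]
  rw [hsum, hnorm z hsubθ, lpBaireVal_eq]
  have hv : ∀ k : ℕ, sSup (BaireSet θ (x k)) = 1 := by
    intro k
    rw [← lpBaireVal_eq, ← hnorm (x k) (hsupp k)]
    exact hnormal k
  -- upper bound
  have hub : ∀ r ∈ BaireSet θ z, r ≤ ∑ k ∈ Finset.range n, |a k| := by
    intro r hr
    obtain ⟨N, I, hseg, hinc, hr⟩ := (mem_baireSet_iff θ z r).1 hr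
    have key : ∀ k ∈ Finset.range n, (∑ i, ∑ s ∈ I i, |x k s|) ≤ 1 := by
      intro k _
      rw [← hv k]
      exact le_csSup (baireSet_bddAbove θ (x k)) (mem_baireSet_of_family θ (x k) I hseg hinc)
    calc r = ∑ i, ∑ s ∈ I i, |z s| := hr
      _ ≤ ∑ i, ∑ s ∈ I i, ∑ k ∈ Finset.range n, |a k| * |x k s| := by
          refine Finset.sum_le_sum fun i _ => Finset.sum_le_sum fun s _ => ?_
          rw [hzapp s]
          refine (Finset.abs_sum_le_sum_abs _ _).trans ?_
          exact le_of_eq (Finset.sum_congr rfl fun k _ => abs_mul _ _)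
      _ = ∑ i, ∑ k ∈ Finset.range n, ∑ s ∈ I i, |a k| * |x k s| :=
          Finset.sum_congr rfl fun i _ => Finset.sum_comm
      _ = ∑ k ∈ Finset.range n, ∑ i, ∑ s ∈ I i, |a k| * |x k s| := Finset.sum_comm
      _ = ∑ k ∈ Finset.range n, |a k| * ∑ i, ∑ s ∈ I i, |x k s| := by
          refine Finset.sum_congr rfl fun k _ => ?_
          rw [Finset.mul_sum]
          exact Finset.sum_congr rfl fun i _ => (Finset.mul_sum _ _ _).symm
      _ ≤ ∑ k ∈ Finset.range n, |a k| * 1 := Finset.sum_le_sum fun k hk =>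
          mul_le_mul_of_nonneg_left (key k hk) (abs_nonneg _)
      _ = ∑ k ∈ Finset.range n, |a k| := by simp
  -- lower bound: attained witnesses for each x k
  have hwit : ∀ k : Fin n, ∃ (m : ℕ) (J : Fin m → Finset (List ℕ)),
      (∀ i, IsSegment θ ↑(J i)) ∧ (∀ i j, i ≠ j → CompIncomp ↑(J i) ↑(J j)) ∧
      (1:ℝ) = ∑ i, ∑ s ∈ J i, |x (k:ℕ) s| := by
    intro k
    have h := sSup_mem_baireSet θ (x (k:ℕ))
    rw [hv (k:ℕ)] at h
    exact (mem_baireSet_iff θ (x (k:ℕ)) 1).1 h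
  choose m J hJseg hJinc hJval using hwit
  set trim : ∀ k : Fin n, Fin (m k) → Finset (List ℕ) := fun k i =>
    (J k i).filter (fun l => ∃ p ∈ (x (k:ℕ)).support ∩ J k i,
      ∃ q ∈ (x (k:ℕ)).support ∩ J k i, p <+: l ∧ l <+: q) with htrimdef
  have htsub : ∀ k i, trim k i ⊆ J k i := fun k i => Finset.filter_subset _ _
  have htmem : ∀ k i l, l ∈ trim k i → (∃ p ∈ (x (k:ℕ)).support, p <+: l) ∧
      (∃ q ∈ (x (k:ℕ)).support, l <+: q) := by
    intro k i l hl
    obtain ⟨-, p, hp, q, hq, hpl, hlq⟩ := Finset.mem_filter.1 hl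
    exact ⟨⟨p, (Finset.mem_inter.1 hp).1, hpl⟩, ⟨q, (Finset.mem_inter.1 hq).1, hlq⟩⟩
  have htseg : ∀ k i, IsSegment θ ↑(trim k i) := by
    intro k i
    obtain ⟨hsub, hchain, hconv⟩ := hJseg k i
    refine ⟨fun l hl => hsub (Finset.mem_coe.2 (htsub k i (Finset.mem_coe.1 hl))), ?_, ?_⟩
    · intro s hs t ht
      exact hchain s (Finset.mem_coe.2 (htsub k i (Finset.mem_coe.1 hs)))
        t (Finset.mem_coe.2 (htsub k i (Finset.mem_coe.1 ht)))
    · intro s hs t ht l hl hsl hlt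
      have hs' := Finset.mem_coe.1 hs
      have ht' := Finset.mem_coe.1 ht
      obtain ⟨-, p, hp, -, -, hps, -⟩ := Finset.mem_filter.1 hs'
      obtain ⟨-, -, -, q, hq, -, htq⟩ := Finset.mem_filter.1 ht'
      have hlJ : l ∈ J k i := Finset.mem_coe.1 <| hconv s
        (Finset.mem_coe.2 (htsub k i hs')) t (Finset.mem_coe.2 (htsub k i ht')) l hl hsl hlt
      refine Finset.mem_coe.2 (Finset.mem_filter.2 ⟨hlJ, p, hp, q, hq, ?_, ?_⟩)
      · exact hps.trans hsl
      · exact hlt.trans htq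
  have htinc : ∀ ki kj : Σ k : Fin n, Fin (m k), ki ≠ kj →
      CompIncomp ↑(trim ki.1 ki.2) ↑(trim kj.1 kj.2) := by
    rintro ⟨k, i⟩ ⟨k', j⟩ hne s hs t ht hcomp
    by_cases hk : k = k'
    · subst hk
      have hij : i ≠ j := fun h => hne (by rw [h])
      exact hJinc k i j hij s (Finset.mem_coe.2 (htsub k i (Finset.mem_coe.1 hs)))
        t (Finset.mem_coe.2 (htsub k j (Finset.mem_coe.1 ht))) hcomp
    · have hk' : (k:ℕ) ≠ (k':ℕ) := fun h => hk (Fin.ext h)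
      obtain ⟨⟨p, hp, hps⟩, ⟨q, hq, hsq⟩⟩ := htmem k i s (Finset.mem_coe.1 hs)
      obtain ⟨⟨p', hp', hps'⟩, ⟨q', hq', hsq'⟩⟩ := htmem k' j t (Finset.mem_coe.1 ht)
      rcases hcomp with h | h
      · exact hincomp (k:ℕ) (k':ℕ) hk' p (Finset.mem_coe.2 hp) q' (Finset.mem_coe.2 hq')
          (Or.inl (hps.trans (h.trans hsq')))
      · exact hincomp (k':ℕ) (k:ℕ) (fun e => hk' e.symm) p' (Finset.mem_coe.2 hp')
          q (Finset.mem_coe.2 hq) (Or.inl (hps'.trans (h.trans hsq)))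
  have htval : ∀ k i, ∑ s ∈ trim k i, |x (k:ℕ) s| = ∑ s ∈ J k i, |x (k:ℕ) s| := by
    intro k i
    refine Finset.sum_subset (htsub k i) fun s hs hs' => ?_
    by_contra h
    have hsmem : s ∈ (x (k:ℕ)).support :=
      Finsupp.mem_support_iff.2 (fun e => h (by rw [e]; simp))
    exact hs' (Finset.mem_filter.2 ⟨hs, s, Finset.mem_inter.2 ⟨hsmem, hs⟩, s,
      Finset.mem_inter.2 ⟨hsmem, hs⟩, List.prefix_refl s, List.prefix_refl s⟩)
  have hztr : ∀ (k : Fin n) i, ∀ s ∈ trim k i, |z s| = |a (k:ℕ)| * |x (k:ℕ) s| := by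
    intro k i s hs
    obtain ⟨⟨p, hp, hps⟩, -⟩ := htmem k i s hs
    rw [hztrim (k:ℕ) (Finset.mem_range.2 k.isLt) s ⟨p, hp, hps⟩, abs_mul]
  have hmem := mem_baireSet_of_family θ z (fun ki : Σ k : Fin n, Fin (m k) => trim ki.1 ki.2)
    (fun ki => htseg ki.1 ki.2) htinc
  refine le_antisymm (csSup_le ⟨0, zero_mem_baireSet θ z⟩ hub) ?_
  refine le_trans (le_of_eq ?_) (le_csSup (baireSet_bddAbove θ z) hmem)
  rw [← Finset.univ_sigma_univ, Finset.sum_sigma]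
  rw [← Fin.sum_univ_eq_sum_range (fun k => |a k|) n]
  refine Finset.sum_congr rfl fun k _ => ?_
  calc |a (k:ℕ)| = |a (k:ℕ)| * (∑ i, ∑ s ∈ J k i, |x (k:ℕ) s|) := by rw [← hJval k, mul_one]
    _ = ∑ i, ∑ s ∈ trim k i, |z s| := by
        rw [Finset.mul_sum]
        refine Finset.sum_congr rfl fun i _ => ?_
        rw [← htval k i, Finset.mul_sum]
        exact Finset.sum_congr rfl fun s hs => (hztr k i s hs).symm
end
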